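/- arXiv:1811.02876 — 6 statements merged into one kernel-verified Lean document; each statement's English description precedes it below -/
import Mathlib

section
/- Let v ∈ Γ be primitive with (v.v) < 0. Then the index [K_v : ℤh² + ℤv] equals 1 or 3. If the index is 1, then disc(K_v) = −3(v.v) and disc(K_v) ≡ 0 (mod 6). If the index is 3, then (v.v) ≡ 0 (mod 6), disc(K_v) = −(v.v)/3, and disc(K_v) ≡ 2 (mod 6). -/
open scoped BigOperators

noncomputable section

/-- The negative definite `E₈` Gram matrix. -/
def E8M : Matrix (Fin 8) (Fin 8) ℤ := - CartanMatrix.E₈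

/-- The Gram matrix of the cubic lattice `Γ̄ = E₈(-1)² ⊕ U² ⊕ I₀,₃` on `ℤ²³`. -/
def gramC : Fin 23 → Fin 23 → ℤ := fun i j =>
  if i.val < 8 ∧ j.val < 8 then
    E8M ⟨i.val % 8, Nat.mod_lt _ (by norm_num)⟩ ⟨j.val % 8, Nat.mod_lt _ (by norm_num)⟩
  else if 8 ≤ i.val ∧ i.val < 16 ∧ 8 ≤ j.val ∧ j.val < 16 then
    E8M ⟨(i.val - 8) % 8, Nat.mod_lt _ (by norm_num)⟩ ⟨(j.val - 8) % 8, Nat.mod_lt _ (by norm_num)⟩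
  else if (i.val = 16 ∧ j.val = 17) ∨ (i.val = 17 ∧ j.val = 16) ∨
      (i.val = 18 ∧ j.val = 19) ∨ (i.val = 19 ∧ j.val = 18) then 1
  else if 20 ≤ i.val ∧ i = j then -1
  else 0

/-- The bilinear form of the cubic lattice `Γ̄`. -/
def GB (x y : Fin 23 → ℤ) : ℤ := ∑ i, ∑ j, gramC i j * x i * y j

/-- The class `h² = (0,…,0,1,1,1)`. -/
def h2 : Fin 23 → ℤ := Pi.single 20 1 + Pi.single 21 1 + Pi.single 22 1

/-- A vector is primitive if it is not `m • w` with `|m| ≥ 2`. -/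
def PrimitiveC (v : Fin 23 → ℤ) : Prop :=
  ¬ ∃ (m : ℤ) (w : Fin 23 → ℤ), 2 ≤ |m| ∧ v = m • w

/-- Membership in `Γ = (h²)^⊥ ⊂ Γ̄`. -/
def inGamma (x : Fin 23 → ℤ) : Prop := GB h2 x = 0

lemma GB_add_right (x y z : Fin 23 → ℤ) : GB x (y + z) = GB x y + GB x z := by
  simp [GB, Pi.add_apply, mul_add, Finset.sum_add_distrib]

lemma GB_smul_right (c : ℤ) (x y : Fin 23 → ℤ) : GB x (c • y) = c * GB x y := by
  simp only [GB, Finset.mul_sum]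
  refine Finset.sum_congr rfl fun i _ => Finset.sum_congr rfl fun j _ => ?_
  simp only [Pi.smul_apply, smul_eq_mul]; ring

/-- `Γ = (h²)^⊥` as a submodule of `ℤ²³`. -/
def Gamma : Submodule ℤ (Fin 23 → ℤ) where
  carrier := {x | GB h2 x = 0}
  add_mem' := by
    intro a b ha hb
    simp only [Set.mem_setOf_eq] at *
    rw [GB_add_right, ha, hb, add_zero]
  zero_mem' := by simp [GB]
  smul_mem' := by
    intro c x hx
    simp only [Set.mem_setOf_eq] at *
    rw [GB_smul_right, hx, mul_zero]

/-- The saturation of a submodule. -/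
def sat {R M : Type*} [CommRing R] [IsDomain R] [AddCommGroup M] [Module R M] (N : Submodule R M) :
    Submodule R M where
  carrier := {x | ∃ n : R, n ≠ 0 ∧ n • x ∈ N}
  add_mem' := by
    rintro x y ⟨n, hn, hx⟩ ⟨m, hm, hy⟩
    refine ⟨n * m, mul_ne_zero hn hm, ?_⟩
    have h1 : (n * m) • (x + y) = m • (n • x) + n • (m • y) := by
      rw [smul_add, mul_comm n m, mul_smul, mul_smul, smul_comm m n y]
    rw [h1]
    exact N.add_mem (N.smul_mem m hx) (N.smul_mem n hy)
  zero_mem' := ⟨1, one_ne_zero, by simp⟩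
  smul_mem' := by
    rintro c x ⟨n, hn, hx⟩
    exact ⟨n, hn, by rw [smul_comm]; exact N.smul_mem c hx⟩

/-- The saturation `K_v` of `ℤh² + ℤv` in `Γ̄`. -/
def Kv (v : Fin 23 → ℤ) : Submodule ℤ (Fin 23 → ℤ) :=
  sat (Submodule.span ℤ ({h2, v} : Set (Fin 23 → ℤ)))

/-- `d` is the discriminant of `K_v`: some ℤ-basis of `K_v` has Gram determinant `d`. -/
def discIs (v : Fin 23 → ℤ) (d : ℤ) : Prop :=
  ∃ x y : Fin 23 → ℤ, Kv v = Submodule.span ℤ ({x, y} : Set (Fin 23 → ℤ)) ∧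
    d = GB x x * GB y y - GB x y * GB y x

/-- The index of `ℤh² + ℤv` in its saturation `K_v`. -/
def idx (v : Fin 23 → ℤ) : ℕ :=
  (Submodule.span ℤ ({h2, v} : Set (Fin 23 → ℤ))).toAddSubgroup.relIndex
    (Kv v).toAddSubgroup

/-- Isometries of the cubic lattice `Γ̄`. -/
def IsIsomC (g : (Fin 23 → ℤ) ≃ₗ[ℤ] (Fin 23 → ℤ)) : Prop := ∀ x y, GB (g x) (g y) = GB x y

end

/-!
Write `N = ℤh² + ℤv`. Pairing with `h²` and using that `v` is primitive shows that every
`x ∈ K_v` satisfies `3x + (h².x) h² ∈ ℤv`. Hence `x ↦ (h².x) mod 3` is a homomorphism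
`K_v → ℤ/3` with kernel `N`, and the index divides `3`. If `h², v` have determinant `e` in a basis
of `K_v`, then `-3(v.v) = e² disc(K_v)` and `e² = [K_v : N]²`. The vector `h²` is characteristic
(`x.x ≡ h².x mod 2`), so `v.v` is even. In index `3`, an `x₀ ∈ K_v ∖ N` has
`3x₀ + (h².x₀) h² = b v` with `3 ∤ h².x₀, b`, and squaring gives `9(x₀.x₀) + 3(h².x₀)² = b²(v.v)`,
whence `v.v = 3t` with `t ≡ 1 mod 3`.
-/

section PairSpan

variable {R M : Type*} [CommRing R] [AddCommGroup M] [Module R M]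

def gramDet (B : LinearMap.BilinForm R M) (x y : M) : R := B x x * B y y - B x y * B y x

lemma gramDet_add_smul (B : LinearMap.BilinForm R M) (x y : M) (p q r s : R) :
    gramDet B (p • x + q • y) (r • x + s • y) = (p * s - q * r) ^ 2 * gramDet B x y := by
  simp only [gramDet, map_add, map_smul, LinearMap.add_apply, LinearMap.smul_apply, smul_eq_mul]
  ring

lemma mem_span_pair_left (x y : M) : x ∈ Submodule.span R {x, y} :=
  Submodule.subset_span (Set.mem_insert _ _)

lemma mem_span_pair_right (x y : M) : y ∈ Submodule.span R {x, y} :=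
  Submodule.subset_span (Set.mem_insert_of_mem _ rfl)

lemma span_pair_le_of_isUnit_det {u w x y : M} {p q r s : R} (hu : p • x + q • y = u)
    (hw : r • x + s • y = w) (he : IsUnit (p * s - q * r)) :
    Submodule.span R {x, y} ≤ Submodule.span R {u, w} := by
  obtain ⟨e, he⟩ := he.exists_left_inv
  rw [Submodule.span_le, Set.insert_subset_iff, Set.singleton_subset_iff]
  refine ⟨Submodule.mem_span_pair.mpr ⟨e * s, -(e * q), ?_⟩,
    Submodule.mem_span_pair.mpr ⟨-(e * r), e * p, ?_⟩⟩
  · rw [← hu, ← hw]; linear_combination (norm := module) he • x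
  · rw [← hu, ← hw]; linear_combination (norm := module) he • y

lemma det_mul_det_eq_sq {u w x y : M} {p q r s a b c d k : R}
    (hind : LinearIndependent R ![u, w]) (hu : p • x + q • y = u) (hw : r • x + s • y = w)
    (hx : k • x = a • u + b • w) (hy : k • y = c • u + d • w) :
    (p * s - q * r) * (a * d - b * c) = k ^ 2 := by
  subst hu hw
  have hku : (p * a + q * c - k) • (p • x + q • y) + (p * b + q * d) • (r • x + s • y) = 0 := by
    linear_combination (norm := module) -(p • hx) - q • hy
  have hkw : (r * a + s * c) • (p • x + q • y) + (r * b + s * d - k) • (r • x + s • y) = 0 := by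
    linear_combination (norm := module) -(r • hx) - s • hy
  obtain ⟨h₁, h₂⟩ := LinearIndependent.pair_iff.mp hind _ _ hku
  obtain ⟨-, h₄⟩ := LinearIndependent.pair_iff.mp hind _ _ hkw
  linear_combination (r * b + s * d) * h₁ + k * h₄ - (r * a + s * c) * h₂

end PairSpan

lemma gramC_symm : ∀ i j, gramC i j = gramC j i := by decide

lemma GB_symm (x y : Fin 23 → ℤ) : GB x y = GB y x := by
  rw [GB, GB, Finset.sum_comm]
  exact Finset.sum_congr rfl fun i _ => Finset.sum_congr rfl fun j _ => by rw [gramC_symm]; ring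

lemma GB_add_left (x y z : Fin 23 → ℤ) : GB (x + y) z = GB x z + GB y z := by
  rw [GB_symm, GB_add_right, GB_symm z x, GB_symm z y]

lemma GB_smul_left (c : ℤ) (x y : Fin 23 → ℤ) : GB (c • x) y = c * GB x y := by
  rw [GB_symm, GB_smul_right, GB_symm]

def GBForm : LinearMap.BilinForm ℤ (Fin 23 → ℤ) :=
  LinearMap.mk₂ ℤ GB GB_add_left GB_smul_left GB_add_right GB_smul_right

@[simp]
lemma GBForm_apply (x y : Fin 23 → ℤ) : GBForm x y = GB x y := rfl

lemma GB_h2_h2 : GB h2 h2 = -3 := by decide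

lemma GB_single (i j : Fin 23) (a b : ℤ) :
    GB (Pi.single i a) (Pi.single j b) = gramC i j * a * b := by
  simp [GB, Pi.single_apply]

lemma GB_h2_single (i : Fin 23) (a : ℤ) : GB h2 (Pi.single i a) = -h2 i * a := by
  have h : ∀ i : Fin 23, GB h2 (Pi.single i 1) = -h2 i := by decide
  rw [← mul_one a, ← smul_eq_mul, Pi.single_smul, GB_smul_right, h, smul_eq_mul, mul_one, mul_comm]

lemma GB_self_eq_GB_h2_zmod_two (x : Fin 23 → ℤ) : (GB x x : ZMod 2) = GB h2 x := by
  let F : (Fin 23 → ℤ) →+ ZMod 2 :=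
    { toFun := fun x => ((GB x x - GB h2 x : ℤ) : ZMod 2)
      map_zero' := by simp [GB]
      map_add' := fun x y => by
        have htwo : ((2 : ℤ) : ZMod 2) = 0 := by decide
        simp only [GB_add_left, GB_add_right, GB_symm y x]
        push_cast
        linear_combination (GB x y : ZMod 2) * htwo }
  have hF : F = 0 := AddMonoidHom.functions_ext _ _ _ fun i a => by
    have hdiag : ((gramC i i + h2 i : ℤ) : ZMod 2) = 0 := by
      revert i; decide
    have hsq : ((a : ℤ) : ZMod 2) ^ 2 = a := ZMod.pow_card _
    show ((GB _ _ - GB h2 _ : ℤ) : ZMod 2) = 0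
    rw [GB_single, GB_h2_single]
    push_cast at hdiag ⊢
    linear_combination (a : ZMod 2) * hdiag + ((gramC i i : ℤ) : ZMod 2) * hsq
  have := DFunLike.congr_fun hF x
  push_cast [F] at this
  exact sub_eq_zero.mp this

lemma two_dvd_GB_self_of_inGamma {x : Fin 23 → ℤ} (hx : inGamma x) : 2 ∣ GB x x := by
  have h : (GB x x : ZMod 2) = 0 := by
    rw [GB_self_eq_GB_h2_zmod_two, show GB h2 x = 0 from hx, Int.cast_zero]
  exact_mod_cast (ZMod.intCast_zmod_eq_zero_iff_dvd _ 2).mp h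

namespace PrimitiveC

variable {v : Fin 23 → ℤ}

lemma ne_zero (hv : PrimitiveC v) : v ≠ 0 := by
  rintro rfl
  exact hv ⟨2, 0, by norm_num, by simp⟩

lemma isUnit_of_forall_dvd (hv : PrimitiveC v) {g : ℤ} (h : ∀ i, g ∣ v i) : IsUnit g := by
  choose w hw using h
  rcases eq_or_ne g 0 with rfl | hg0
  · exact absurd (funext fun i => by simp [hw i]) hv.ne_zero
  · rw [Int.isUnit_iff_natAbs_eq]
    by_contra hg
    have : 2 ≤ g.natAbs := by omega
    exact hv ⟨g, w, by rwa [Int.abs_eq_natAbs, ← Nat.cast_ofNat, Nat.cast_le], funext hw⟩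

lemma exists_sum_mul_eq_one (hv : PrimitiveC v) : ∃ c : Fin 23 → ℤ, ∑ i, c i * v i = 1 := by
  obtain ⟨g, hg⟩ := Submodule.IsPrincipal.principal (Ideal.span (Set.range v))
  have hdvd : ∀ i, g ∣ v i := fun i => by
    have hi : v i ∈ Ideal.span (Set.range v) := Ideal.subset_span ⟨i, rfl⟩
    rwa [hg, Ideal.submodule_span_eq, Ideal.mem_span_singleton] at hi
  have hone : (1 : ℤ) ∈ Ideal.span (Set.range v) := by
    rw [hg, Ideal.submodule_span_eq, Ideal.span_singleton_eq_top.mpr (hv.isUnit_of_forall_dvd hdvd)]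
    trivial
  simpa using (Submodule.mem_span_range_iff_exists_fun ℤ).mp hone

lemma dvd_of_forall_dvd_mul (hv : PrimitiveC v) {k c : ℤ} (h : ∀ i, k ∣ c * v i) : k ∣ c := by
  obtain ⟨a, ha⟩ := hv.exists_sum_mul_eq_one
  have : c = ∑ i, a i * (c * v i) := by
    simp_rw [mul_left_comm (a _) c, ← Finset.mul_sum, ha, mul_one]
  rw [this]
  exact Finset.dvd_sum fun i _ => (h i).mul_left _

lemma exists_eq_smul_of_smul_eq (hv : PrimitiveC v) {n m : ℤ} (hn : n ≠ 0) {u : Fin 23 → ℤ}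
    (h : n • u = m • v) : ∃ e : ℤ, u = e • v := by
  obtain ⟨e, rfl⟩ := hv.dvd_of_forall_dvd_mul fun i => ⟨u i, by simpa using (congrFun h i).symm⟩
  exact ⟨e, smul_right_injective _ hn (by simp only [h, mul_smul])⟩

end PrimitiveC

abbrev spanH2 (v : Fin 23 → ℤ) : Submodule ℤ (Fin 23 → ℤ) :=
  Submodule.span ℤ ({h2, v} : Set (Fin 23 → ℤ))

lemma spanH2_le_Kv (v : Fin 23 → ℤ) : spanH2 v ≤ Kv v :=
  fun _ hx => ⟨1, one_ne_zero, by rwa [one_smul]⟩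

lemma h2_mem_Kv (v : Fin 23 → ℤ) : h2 ∈ Kv v :=
  spanH2_le_Kv v (mem_span_pair_left h2 v)

lemma mem_Kv_self (v : Fin 23 → ℤ) : v ∈ Kv v :=
  spanH2_le_Kv v (mem_span_pair_right h2 v)

lemma GB_h2_smul_add_smul {v : Fin 23 → ℤ} (hvG : inGamma v) (a b : ℤ) :
    GB h2 (a • h2 + b • v) = -3 * a := by
  rw [GB_add_right, GB_smul_right, GB_smul_right, GB_h2_h2, show GB h2 v = 0 from hvG]
  ring

lemma linearIndependent_h2_v {v : Fin 23 → ℤ} (hvG : inGamma v) (hv : PrimitiveC v) :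
    LinearIndependent ℤ ![h2, v] := by
  refine LinearIndependent.pair_iff.mpr fun a b hab => ?_
  have ha : a = 0 := by
    have := GB_h2_smul_add_smul hvG a b
    rw [hab, ← GBForm_apply, map_zero] at this
    omega
  subst ha
  rw [zero_smul, zero_add, smul_eq_zero] at hab
  exact ⟨rfl, hab.resolve_right hv.ne_zero⟩

lemma exists_three_smul_add_eq {v x : Fin 23 → ℤ} (hvG : inGamma v) (hv : PrimitiveC v)
    (hx : x ∈ Kv v) : ∃ b : ℤ, (3 : ℤ) • x + GB h2 x • h2 = b • v := by
  obtain ⟨n, hn, hnx⟩ := hx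
  obtain ⟨c, d, hcd⟩ := Submodule.mem_span_pair.mp hnx
  have hc : n * GB h2 x = -3 * c := by
    rw [← GB_smul_right, ← hcd, GB_h2_smul_add_smul hvG]
  refine hv.exists_eq_smul_of_smul_eq hn (m := 3 * d) ?_
  calc n • ((3 : ℤ) • x + GB h2 x • h2) = (3 : ℤ) • (n • x) + (n * GB h2 x) • h2 := by module
    _ = (3 * d) • v := by rw [← hcd, hc]; module

lemma dvd_of_smul_h2_eq_smul {k f : ℤ} {z : Fin 23 → ℤ} (h : f • h2 = k • z) : k ∣ f := by
  have := congrFun h 22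
  simp only [Pi.smul_apply, smul_eq_mul, show h2 22 = 1 by decide, mul_one] at this
  exact ⟨_, this⟩

lemma three_dvd_iff_of_three_smul_add_eq {v x : Fin 23 → ℤ} (hv : PrimitiveC v) {a b : ℤ}
    (h : (3 : ℤ) • x + a • h2 = b • v) : 3 ∣ a ↔ 3 ∣ b := by
  constructor
  · rintro ⟨a, rfl⟩
    refine hv.dvd_of_forall_dvd_mul fun i => ⟨x i + a * h2 i, ?_⟩
    have := congrFun h i
    simp only [Pi.add_apply, Pi.smul_apply, smul_eq_mul] at this
    linarith
  · rintro ⟨b, rfl⟩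
    exact dvd_of_smul_h2_eq_smul (z := b • v - x) (by linear_combination (norm := module) h)

lemma mem_spanH2_iff {v x : Fin 23 → ℤ} (hvG : inGamma v) (hv : PrimitiveC v)
    (hx : x ∈ Kv v) : x ∈ spanH2 v ↔ 3 ∣ GB h2 x := by
  constructor
  · intro hxN
    obtain ⟨c, d, rfl⟩ := Submodule.mem_span_pair.mp hxN
    exact ⟨-c, by rw [GB_h2_smul_add_smul hvG]; ring⟩
  · intro h3
    obtain ⟨b, hb⟩ := exists_three_smul_add_eq hvG hv hx
    obtain ⟨b, rfl⟩ := (three_dvd_iff_of_three_smul_add_eq hv hb).mp h3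
    obtain ⟨a, ha⟩ := h3
    refine Submodule.mem_span_pair.mpr ⟨-a, b, smul_right_injective _ (three_ne_zero (α := ℤ)) ?_⟩
    simp only
    rw [ha] at hb
    linear_combination (norm := module) -hb

lemma idx_dvd_three {v : Fin 23 → ℤ} (hvG : inGamma v) (hv : PrimitiveC v) : idx v ∣ 3 := by
  let ψ : (Kv v).toAddSubgroup →+ ZMod 3 :=
    ((Int.castAddHom (ZMod 3)).comp (GBForm h2).toAddMonoidHom).comp (Kv v).toAddSubgroup.subtype
  have hker : ψ.ker = (spanH2 v).toAddSubgroup.addSubgroupOf (Kv v).toAddSubgroup := by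
    ext ⟨x, hx⟩
    rw [AddMonoidHom.mem_ker, AddSubgroup.mem_addSubgroupOf]
    exact (ZMod.intCast_zmod_eq_zero_iff_dvd _ 3).trans (mem_spanH2_iff hvG hv hx).symm
  have : idx v = Nat.card ψ.range := by rw [← AddSubgroup.index_ker, hker]; rfl
  simpa [this] using AddSubgroup.card_addSubgroup_dvd_card ψ.range

lemma idx_eq_one_or_three {v : Fin 23 → ℤ} (hvG : inGamma v) (hv : PrimitiveC v) :
    idx v = 1 ∨ idx v = 3 :=
  (Nat.dvd_prime Nat.prime_three).mp (idx_dvd_three hvG hv)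

lemma idx_eq_one_iff (v : Fin 23 → ℤ) : idx v = 1 ↔ Kv v ≤ spanH2 v :=
  AddSubgroup.relIndex_eq_one

lemma exists_three_smul_eq_add {v x : Fin 23 → ℤ} (hvG : inGamma v) (hv : PrimitiveC v)
    (hx : x ∈ Kv v) : ∃ a b : ℤ, (3 : ℤ) • x = a • h2 + b • v := by
  obtain ⟨b, hb⟩ := exists_three_smul_add_eq hvG hv hx
  exact ⟨-GB h2 x, b, by rw [← hb]; module⟩

lemma sq_eq_nine_of_mul_eq_nine {e f : ℤ} (hef : e * f = 9) (hf : 3 ∣ f) (he : ¬ IsUnit e) :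
    e ^ 2 = 9 := by
  obtain ⟨f, rfl⟩ := hf
  have h3 : e.natAbs ∣ 3 := Int.natAbs_dvd_natAbs.mpr (⟨f, by linarith⟩ : e ∣ 3)
  rw [Int.isUnit_iff_natAbs_eq] at he
  rw [← Int.natAbs_sq, ((Nat.dvd_prime Nat.prime_three).mp h3).resolve_left he]
  norm_num

lemma det_sq_eq_one_of_idx_eq_one {v x y : Fin 23 → ℤ} {p q r s : ℤ} (hvG : inGamma v)
    (hv : PrimitiveC v) (hK : Kv v = Submodule.span ℤ {x, y}) (hpq : p • x + q • y = h2)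
    (hrs : r • x + s • y = v) (h1 : idx v = 1) : (p * s - q * r) ^ 2 = 1 := by
  have hKN := (idx_eq_one_iff v).mp h1
  obtain ⟨a, b, hab⟩ := Submodule.mem_span_pair.mp (hKN (hK ▸ mem_span_pair_left (R := ℤ) x y))
  obtain ⟨c, d, hcd⟩ := Submodule.mem_span_pair.mp (hKN (hK ▸ mem_span_pair_right (R := ℤ) x y))
  have hdet := det_mul_det_eq_sq (linearIndependent_h2_v hvG hv) hpq hrs (k := 1)
    (by rw [one_smul, hab]) (by rw [one_smul, hcd])
  rw [one_pow] at hdet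
  rcases Int.eq_one_or_neg_one_of_mul_eq_one hdet with he | he <;> rw [he] <;> norm_num

/-- `e = p * s - q * r` is not a unit, as `K_v ≠ N`, and divides `3`, as `3 K_v ⊆ N` while
`h² ∉ 3 Γ̄`. -/
lemma det_sq_eq_nine_of_idx_eq_three {v x y : Fin 23 → ℤ} {p q r s : ℤ} (hvG : inGamma v)
    (hv : PrimitiveC v) (hK : Kv v = Submodule.span ℤ {x, y}) (hpq : p • x + q • y = h2)
    (hrs : r • x + s • y = v) (h3 : idx v = 3) : (p * s - q * r) ^ 2 = 9 := by
  obtain ⟨a, b, hab⟩ := exists_three_smul_eq_add hvG hv (hK ▸ mem_span_pair_left (R := ℤ) x y)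
  obtain ⟨c, d, hcd⟩ := exists_three_smul_eq_add hvG hv (hK ▸ mem_span_pair_right (R := ℤ) x y)
  have hdet := det_mul_det_eq_sq (linearIndependent_h2_v hvG hv) hpq hrs hab hcd
  norm_num at hdet
  have hf : 3 ∣ a * d - b * c := dvd_of_smul_h2_eq_smul (z := d • x - b • y) (by
    linear_combination (norm := module) b • hcd - d • hab)
  have he : ¬ IsUnit (p * s - q * r) := fun he => by
    have hle := span_pair_le_of_isUnit_det hpq hrs he
    rw [← hK, ← idx_eq_one_iff] at hle
    omega
  exact sq_eq_nine_of_mul_eq_nine hdet hf he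

lemma idx_sq_mul_disc {v : Fin 23 → ℤ} (hvG : inGamma v) (hv : PrimitiveC v) {d : ℤ}
    (hd : discIs v d) : (idx v : ℤ) ^ 2 * d = -3 * GB v v := by
  obtain ⟨x, y, hK, rfl⟩ := hd
  obtain ⟨p, q, hpq⟩ := Submodule.mem_span_pair.mp (hK ▸ h2_mem_Kv v)
  obtain ⟨r, s, hrs⟩ := Submodule.mem_span_pair.mp (hK ▸ mem_Kv_self v)
  have hgram := gramDet_add_smul GBForm x y p q r s
  rw [hpq, hrs] at hgram
  simp only [gramDet, GBForm_apply, GB_h2_h2, show GB h2 v = 0 from hvG, GB_symm v h2] at hgram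
  have hidx : (idx v : ℤ) ^ 2 = (p * s - q * r) ^ 2 := by
    rcases idx_eq_one_or_three hvG hv with h1 | h3
    · rw [det_sq_eq_one_of_idx_eq_one hvG hv hK hpq hrs h1, h1]; norm_num
    · rw [det_sq_eq_nine_of_idx_eq_three hvG hv hK hpq hrs h3, h3]; norm_num
  rw [hidx]
  linarith

lemma emod_three_eq_one_of_three_mul_add_sq_eq {a b c t : ℤ} (ha : ¬ 3 ∣ a)
    (h : 3 * c + a ^ 2 = b ^ 2 * t) : t % 3 = 1 := by
  have key : ∀ α β τ : ZMod 3, α ≠ 0 → α ^ 2 = β ^ 2 * τ → τ = 1 := by decide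
  have h' := congrArg (fun n : ℤ => (n : ZMod 3)) h
  have h30 : (3 : ZMod 3) = 0 := by decide
  push_cast at h'
  rw [h30, zero_mul, zero_add] at h'
  have ha' : (a : ZMod 3) ≠ 0 := fun h0 => ha ((ZMod.intCast_zmod_eq_zero_iff_dvd a 3).mp h0)
  exact (ZMod.intCast_eq_intCast_iff' t 1 3).mp (by exact_mod_cast key _ _ _ ha' h')

lemma exists_GB_self_eq_three_mul {v : Fin 23 → ℤ} (hvG : inGamma v) (hv : PrimitiveC v)
    (h3 : idx v = 3) : ∃ t, GB v v = 3 * t ∧ t % 3 = 1 := by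
  obtain ⟨x, hxK, hxN⟩ : ∃ x ∈ Kv v, x ∉ spanH2 v := by
    by_contra! h
    exact absurd ((idx_eq_one_iff v).mpr h) (by omega)
  rw [mem_spanH2_iff hvG hv hxK] at hxN
  obtain ⟨b, hb⟩ := exists_three_smul_add_eq hvG hv hxK
  have hb3 : ¬ 3 ∣ b := (three_dvd_iff_of_three_smul_add_eq hv hb).not.mp hxN
  have hvh2 : GB v h2 = 0 := by rw [GB_symm]; exact hvG
  have hvx : 3 * GB v x = b * GB v v := by
    have := congrArg (GB v) hb
    simp only [GB_add_right, GB_smul_right, hvh2] at this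
    linarith
  have hxx : 9 * GB x x + 3 * GB h2 x ^ 2 = b ^ 2 * GB v v := by
    have := congrArg (fun z => GB z z) hb
    simp only [GB_add_left, GB_add_right, GB_smul_left, GB_smul_right, GB_h2_h2,
      GB_symm x h2] at this
    linear_combination this
  obtain ⟨t, ht⟩ : 3 ∣ GB v v :=
    (Int.prime_three.dvd_or_dvd ⟨GB v x, hvx.symm⟩).resolve_left hb3
  refine ⟨t, ht, emod_three_eq_one_of_three_mul_add_sq_eq hxN (c := GB x x) (b := b) ?_⟩
  rw [ht] at hxx
  linarith

theorem stmt_1_general (v : Fin 23 → ℤ) (hvG : inGamma v) (hv : PrimitiveC v) :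
    (idx v = 1 ∨ idx v = 3) ∧
    (idx v = 1 → ∀ d : ℤ, discIs v d → d = -3 * GB v v ∧ d % 6 = 0) ∧
    (idx v = 3 → GB v v % 6 = 0 ∧ ∀ d : ℤ, discIs v d → d = -(GB v v) / 3 ∧ d % 6 = 2) := by
  have heven := two_dvd_GB_self_of_inGamma hvG
  refine ⟨idx_eq_one_or_three hvG hv, fun h1 d hd => ?_, fun h3 => ?_⟩
  · have hdisc := idx_sq_mul_disc hvG hv hd
    rw [h1] at hdisc
    omega
  · obtain ⟨t, ht, ht3⟩ := exists_GB_self_eq_three_mul hvG hv h3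
    refine ⟨by omega, fun d hd => ?_⟩
    have hdisc := idx_sq_mul_disc hvG hv hd
    rw [h3] at hdisc
    omega

/-- For a primitive `v ∈ Γ` with `(v.v) < 0`, the index of `ℤh² + ℤv` in its
saturation `K_v` is `1` or `3`; if it is `1` then `disc K_v = -3(v.v) ≡ 0 (mod 6)`, and if it
is `3` then `(v.v) ≡ 0 (mod 6)` and `disc K_v = -(v.v)/3 ≡ 2 (mod 6)`. -/
theorem stmt_1 (v : Fin 23 → ℤ) (hvG : inGamma v) (hv : PrimitiveC v)
    (hneg : GB v v < 0) :
    (idx v = 1 ∨ idx v = 3) ∧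
    (idx v = 1 → ∀ d : ℤ, discIs v d → d = -3 * GB v v ∧ d % 6 = 0) ∧
    (idx v = 3 → GB v v % 6 = 0 ∧ ∀ d : ℤ, discIs v d → d = -(GB v v) / 3 ∧ d % 6 = 2) :=
  stmt_1_general v hvG hv
end

section
/- Let d be a positive integer with d ≡ 0 (mod 6) and set v_d := e₁ − (d/6)f₁ ∈ Γ̄. Then there exists a ℤ-linear isometry g : Γ̄ → Γ̄ with g(h²) = h² and g(v_d) = −v_d. (Consequently the stabilizer of v_d has index two in the group of isometries of Γ̄ fixing h² and preserving {±v_d}.) -/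
open scoped BigOperators

/-- For `d ≡ 0 (mod 6)`, the vector `v_d = e₁ - (d/6) f₁ ∈ Γ̄`. -/
def vdC0 (d : ℤ) : Fin 23 → ℤ :=
  Pi.single 16 1 - (d / 6) • Pi.single 17 1

/-! The first hyperbolic plane `⟨e₁, f₁⟩` is an orthogonal summand of `Γ̄`, so negating both
`e₁` and `f₁` and fixing every other coordinate is an isometry. It fixes `h²`, which lives in the
`I₀,₃` summand, and negates `v_d`, which lies in that plane. -/

open Finset

section DiagonalUnits

variable {ι R : Type*} [CommRing R]

def diagUnits (ε : ι → Rˣ) : (ι → R) ≃ₗ[R] (ι → R) :=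
  LinearEquiv.piCongrRight fun i => LinearEquiv.smulOfUnit (ε i)

@[simp]
lemma diagUnits_apply (ε : ι → Rˣ) (x : ι → R) (i : ι) : diagUnits ε x i = ε i * x i := rfl

lemma sum_gram_diagUnits [Fintype ι] {G : ι → ι → R} {ε : ι → Rˣ}
    (hG : ∀ i j, G i j * ε i * ε j = G i j) (x y : ι → R) :
    ∑ i, ∑ j, G i j * diagUnits ε x i * diagUnits ε y j = ∑ i, ∑ j, G i j * x i * y j := by
  refine sum_congr rfl fun i _ => sum_congr rfl fun j _ => ?_
  rw [diagUnits_apply, diagUnits_apply]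
  linear_combination x i * y j * hG i j

lemma diagUnits_eq_self {ε : ι → Rˣ} {x : ι → R} (hx : ∀ i, x i ≠ 0 → ε i = 1) :
    diagUnits ε x = x := by
  funext i
  by_cases h : x i = 0 <;> simp [h, hx i]

lemma diagUnits_eq_neg {ε : ι → Rˣ} {x : ι → R} (hx : ∀ i, x i ≠ 0 → ε i = -1) :
    diagUnits ε x = -x := by
  funext i
  by_cases h : x i = 0 <;> simp [h, hx i]

end DiagonalUnits

def negFirstHyperbolic (i : Fin 23) : ℤˣ := if i = 16 ∨ i = 17 then -1 else 1

lemma gramC_mul_negFirstHyperbolic (i j : Fin 23) :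
    gramC i j * negFirstHyperbolic i * negFirstHyperbolic j = gramC i j := by
  revert i j; decide

lemma isIsomC_diagUnits_negFirstHyperbolic : IsIsomC (diagUnits negFirstHyperbolic) :=
  sum_gram_diagUnits gramC_mul_negFirstHyperbolic

lemma negFirstHyperbolic_eq_one_of_h2_ne_zero (i : Fin 23) (hi : h2 i ≠ 0) :
    negFirstHyperbolic i = 1 := by
  revert i; decide

lemma negFirstHyperbolic_eq_neg_one_of_vdC0_ne_zero (d : ℤ) (i : Fin 23) (hi : vdC0 d i ≠ 0) :
    negFirstHyperbolic i = -1 := by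
  by_contra h
  have hi' : i ≠ 16 ∧ i ≠ 17 := by
    simpa [negFirstHyperbolic, not_or] using h
  simp [vdC0, hi'] at hi

theorem stmt_4_general (d : ℤ) :
    ∃ g : (Fin 23 → ℤ) ≃ₗ[ℤ] (Fin 23 → ℤ), IsIsomC g ∧ g h2 = h2 ∧
      g (vdC0 d) = -(vdC0 d) :=
  ⟨diagUnits negFirstHyperbolic, isIsomC_diagUnits_negFirstHyperbolic,
    diagUnits_eq_self negFirstHyperbolic_eq_one_of_h2_ne_zero,
    diagUnits_eq_neg (negFirstHyperbolic_eq_neg_one_of_vdC0_ne_zero d)⟩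

/-- For a positive integer `d ≡ 0 (mod 6)` and `v_d = e₁ - (d/6) f₁`, there is an
isometry of `Γ̄` fixing `h²` and mapping `v_d` to `-v_d`. -/
theorem stmt_4 (d : ℤ) (hd : 0 < d) (h6 : d % 6 = 0) :
    ∃ g : (Fin 23 → ℤ) ≃ₗ[ℤ] (Fin 23 → ℤ), IsIsomC g ∧ g h2 = h2 ∧
      g (vdC0 d) = -(vdC0 d) :=
  stmt_4_general d
end

section
/- Let d be a positive integer with d ≡ 2 (mod 6) and set v_d := 3e₁ − ((d−2)/2)f₁ + (0,…,0,1,−2,1) ∈ Γ̄ (last three coordinates 1,−2,1, so v_d ∈ Γ). Then there is no ℤ-linear isometry g : Γ̄ → Γ̄ with g(h²) = h² and g(v_d) = −v_d; equivalently, every isometry of Γ̄ fixing h² and mapping v_d to ±v_d fixes v_d. -/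
/-!
Modulo `3`, the vector `v_d` is congruent to `h²`: for `d ≡ 2 (mod 6)` the coefficient `(d-2)/2`
is divisible by `3`, so `v_d = h² + 3w`. Any linear map fixing `h²` and negating `v_d` would then
give `2h² = 3(-w - g w)`, impossible since the coordinates of `2h²` are `0` or `2`.
-/

open scoped BigOperators

/-- For `d ≡ 2 (mod 6)`, the vector `v_d = 3e₁ - ((d-2)/2) f₁ + (0,…,0,1,-2,1) ∈ Γ̄`. -/
def vdC2 (d : ℤ) : Fin 23 → ℤ :=
  (3 : ℤ) • Pi.single 16 1 - ((d - 2) / 2) • Pi.single 17 1 +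
    (Pi.single 20 1 - (2 : ℤ) • Pi.single 21 1 + Pi.single 22 1)

lemma exists_two_smul_eq_smul_of_apply_eq_neg {R M : Type*} [Ring R] [AddCommGroup M]
    [Module R M] (f : M →ₗ[R] M) (n : R) {h w : M} (hh : f h = h)
    (hv : f (h + n • w) = -(h + n • w)) : ∃ u : M, (2 : R) • h = n • u := by
  refine ⟨-(w + f w), ?_⟩
  rw [map_add, map_smul, hh, ← sub_eq_zero] at hv
  rw [two_smul, smul_neg, smul_add, ← sub_eq_zero, ← hv]
  abel

lemma vdC2_eq_h2_add_three_smul {d : ℤ} (h6 : d % 6 = 2) :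
    vdC2 d =
      h2 + (3 : ℤ) • (Pi.single 16 1 - ((d - 2) / 6) • Pi.single 17 1 - Pi.single 21 1) := by
  have hq : (d - 2) / 2 = 3 * ((d - 2) / 6) := by omega
  ext i
  fin_cases i <;> simp [vdC2, h2, hq]

lemma not_exists_two_smul_h2_eq_three_smul : ¬ ∃ u : Fin 23 → ℤ, (2 : ℤ) • h2 = (3 : ℤ) • u := by
  rintro ⟨u, hu⟩
  have h20 : (2 : ℤ) = 3 * u 20 := by simpa [h2] using congrFun hu 20
  omega

theorem stmt_5_general (d : ℤ) (h6 : d % 6 = 2) :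
    ¬ ∃ g : (Fin 23 → ℤ) ≃ₗ[ℤ] (Fin 23 → ℤ), IsIsomC g ∧ g h2 = h2 ∧
      g (vdC2 d) = -(vdC2 d) := by
  rintro ⟨g, -, hgh, hgv⟩
  rw [vdC2_eq_h2_add_three_smul h6] at hgv
  exact not_exists_two_smul_h2_eq_three_smul
    (exists_two_smul_eq_smul_of_apply_eq_neg g.toLinearMap 3 hgh hgv)

/-- For a positive integer `d ≡ 2 (mod 6)` and
`v_d = 3e₁ - ((d-2)/2) f₁ + (0,…,0,1,-2,1)`, no isometry of `Γ̄` fixes `h²` and maps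
`v_d` to `-v_d`. -/
theorem stmt_5 (d : ℤ) (hd : 0 < d) (h6 : d % 6 = 2) :
    ¬ ∃ g : (Fin 23 → ℤ) ≃ₗ[ℤ] (Fin 23 → ℤ), IsIsomC g ∧ g h2 = h2 ∧
      g (vdC2 d) = -(vdC2 d) :=
  stmt_5_general d h6
end

section
/- Let d be a positive integer with d ≡ 0 or 2 (mod 6). Then there exist a nonzero integer n and x, y ∈ L_d with (x.x) = (y.y) = 0 and (x.y) = n (an isometric embedding of U(n) into L_d) if and only if there exist integers a, b with 2(a² − ab + b²) = d (i.e. d is represented by the lattice A₂). -/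
open scoped BigOperators

noncomputable section

/-- The Gram matrix of the Mukai lattice `Λ̃ = E₈(-1)² ⊕ U₁ ⊕ U₂ ⊕ U₃ ⊕ U₄` on `ℤ²⁴`,
where the last hyperbolic summand `U₄` carries the sign-changed pairing `(e₄.f₄) = -1`. -/
def gramM : Fin 24 → Fin 24 → ℤ := fun i j =>
  if i.val < 8 ∧ j.val < 8 then
    E8M ⟨i.val % 8, Nat.mod_lt _ (by norm_num)⟩ ⟨j.val % 8, Nat.mod_lt _ (by norm_num)⟩
  else if 8 ≤ i.val ∧ i.val < 16 ∧ 8 ≤ j.val ∧ j.val < 16 then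
    E8M ⟨(i.val - 8) % 8, Nat.mod_lt _ (by norm_num)⟩ ⟨(j.val - 8) % 8, Nat.mod_lt _ (by norm_num)⟩
  else if (i.val = 16 ∧ j.val = 17) ∨ (i.val = 17 ∧ j.val = 16) ∨
      (i.val = 18 ∧ j.val = 19) ∨ (i.val = 19 ∧ j.val = 18) ∨
      (i.val = 20 ∧ j.val = 21) ∨ (i.val = 21 ∧ j.val = 20) then 1
  else if (i.val = 22 ∧ j.val = 23) ∨ (i.val = 23 ∧ j.val = 22) then -1
  else 0

/-- The bilinear (Mukai) form of the lattice `Λ̃`. -/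
def MB (x y : Fin 24 → ℤ) : ℤ := ∑ i, ∑ j, gramM i j * x i * y j

/-- `λ₁ = e₄ - f₄`. -/
def l1 : Fin 24 → ℤ := Pi.single 22 1 - Pi.single 23 1

/-- `λ₂ = e₃ + f₃ + f₄`. -/
def l2 : Fin 24 → ℤ := Pi.single 20 1 + Pi.single 21 1 + Pi.single 23 1

/-- `μ₁ = e₃ - f₃`. -/
def m1 : Fin 24 → ℤ := Pi.single 20 1 - Pi.single 21 1

/-- `μ₂ = -e₃ - e₄ - f₄`. -/
def m2 : Fin 24 → ℤ := -(Pi.single 20 1) - Pi.single 22 1 - Pi.single 23 1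

lemma MB_add_left (x y z : Fin 24 → ℤ) : MB (x + y) z = MB x z + MB y z := by
  simp only [MB, Pi.add_apply, ← Finset.sum_add_distrib]
  refine Finset.sum_congr rfl fun i _ => Finset.sum_congr rfl fun j _ => ?_
  ring

lemma MB_smul_left (c : ℤ) (x y : Fin 24 → ℤ) : MB (c • x) y = c * MB x y := by
  simp only [MB, Finset.mul_sum]
  refine Finset.sum_congr rfl fun i _ => Finset.sum_congr rfl fun j _ => ?_
  simp only [Pi.smul_apply, smul_eq_mul]; ring

/-- Isometries of the Mukai lattice `Λ̃`. -/
def IsIsomM (g : (Fin 24 → ℤ) ≃ₗ[ℤ] (Fin 24 → ℤ)) : Prop := ∀ x y, MB (g x) (g y) = MB x y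

end
/-- The Noether–Lefschetz vector `v_d ∈ Λ̃`: for `d ≡ 0 (mod 6)` it is `e₁ - (d/6) f₁`, and
for `d ≡ 2 (mod 6)` it is `3(e₁ - ((d-2)/6) f₁) + μ₁ - μ₂`. -/
def vdM (d : ℤ) : Fin 24 → ℤ :=
  if d % 6 = 0 then Pi.single 16 1 - (d / 6) • Pi.single 17 1
  else (3 : ℤ) • (Pi.single 16 1 - ((d - 2) / 6) • Pi.single 17 1) + m1 - m2

/-- `L_d`, the saturation of `ℤλ₁ + ℤλ₂ + ℤv_d` in `Λ̃`. -/
def LdSub (d : ℤ) : Submodule ℤ (Fin 24 → ℤ) :=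
  sat (Submodule.span ℤ ({l1, l2, vdM d} : Set (Fin 24 → ℤ)))

/-!
`λ₁, λ₂` span a copy of `A₂`, and `v_d` is orthogonal to both with `s² (v_d.v_d) = -3d`, where
`s = 3` for `d ≡ 0` and `s = 1` for `d ≡ 2 (mod 6)`. Write `N(u, v) = u² - uv + v²`, so that
`(aλ₁ + bλ₂ + cv_d)² = 2N(a, b) + c² (v_d.v_d)`. A nonzero multiple of an isotropic `x ∈ L_d`
is `aλ₁ + bλ₂ + cv_d` with `3dc² = 2N(sa, sb)`, and `c ≠ 0` as soon as `x` pairs nontrivially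
with anything. Since every rational point lies at `N`-distance `< 1` from an integral one, the
Davenport–Cassels descent shows that an integer represented by `N` over `ℚ` is represented over
`ℤ`; with `3 ∣ N(u, v) ⇒ 3 ∣ u + v` and `2 ∣ N(u, v) ⇒ 2 ∣ u, v` this yields `d = 2N(a, b)`.
Conversely, `N(a + b, 2b - a) = 3N(a, b)`, so `(a + b)λ₁ + (2b - a)λ₂ ± s v_d` are isotropic
with product `6d`.
-/

theorem sq_sub_mul_add_sq_nonneg (u v : ℤ) : 0 ≤ u ^ 2 - u * v + v ^ 2 := by
  nlinarith [sq_nonneg (u - v), sq_nonneg u, sq_nonneg v]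

theorem sq_sub_mul_add_sq_eq_zero {u v : ℤ} : u ^ 2 - u * v + v ^ 2 = 0 ↔ u = 0 ∧ v = 0 := by
  refine ⟨fun h => ?_, by rintro ⟨rfl, rfl⟩; ring⟩
  constructor <;> nlinarith [sq_nonneg (u - v), sq_nonneg u, sq_nonneg v]

theorem four_mul_sq_sub_mul_add_sq_le {u v t : ℤ} (hu : 2 * |u| ≤ t) (hv : 2 * |v| ≤ t) :
    4 * (u ^ 2 - u * v + v ^ 2) ≤ 3 * t ^ 2 := by
  have hu₀ := abs_nonneg u
  have hv₀ := abs_nonneg v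
  nlinarith [sq_abs u, sq_abs v, neg_abs_le (u * v), abs_mul u v,
    mul_le_mul hu hv (by positivity) (by linarith)]

theorem exists_eq_mul_add_two_mul_abs_le (u : ℤ) {t : ℕ} (ht : 0 < t) :
    ∃ a r : ℤ, u = a * t + r ∧ 2 * |r| ≤ t := by
  refine ⟨u.bdiv t, u.bmod t, by linarith [Int.bdiv_add_bmod u t], ?_⟩
  have h₁ := Int.le_bmod (x := u) ht
  have h₂ := Int.bmod_lt (x := u) ht
  cases abs_cases (u.bmod t) <;> omega

/-- Davenport–Cassels descent: the line through the rational point `(u, v)/t` of `N = m` and the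
nearest integral point `(a, b)` meets the conic again at a point with smaller denominator
`t' = N(r, s)/t`, where `(r, s) = (u, v) - t (a, b)`. -/
theorem exists_eq_of_natCast_sq_mul_eq (n : ℕ) : ∀ {m u v : ℤ}, 0 < n →
    (n : ℤ) ^ 2 * m = u ^ 2 - u * v + v ^ 2 → ∃ a b : ℤ, m = a ^ 2 - a * b + b ^ 2 := by
  induction n using Nat.strong_induction_on with
  | _ n ih =>
  intro m u v hn h
  obtain ⟨a, r, rfl, hr⟩ := exists_eq_mul_add_two_mul_abs_le u hn
  obtain ⟨b, s, rfl, hs⟩ := exists_eq_mul_add_two_mul_abs_le v hn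
  obtain ⟨t', ht'⟩ : ∃ t', t' = n * (m - (a ^ 2 - a * b + b ^ 2)) -
      (2 * a * r - a * s - b * r + 2 * b * s) := ⟨_, rfl⟩
  have hrs : r ^ 2 - r * s + s ^ 2 = n * t' := by linear_combination -h - n * ht'
  have hlt : t' < n := by nlinarith [four_mul_sq_sub_mul_add_sq_le hr hs]
  rcases (show 0 ≤ t' by nlinarith [sq_sub_mul_add_sq_nonneg r s]).eq_or_lt with h₀ | h₀
  · obtain ⟨rfl, rfl⟩ := sq_sub_mul_add_sq_eq_zero.1 (by rw [hrs, ← h₀, mul_zero])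
    refine ⟨a, b, mul_left_cancel₀ (pow_pos (Nat.cast_pos.2 hn) 2).ne' ?_⟩
    linear_combination h
  · lift t' to ℕ using h₀.le with n'
    refine ih n' (by exact_mod_cast hlt) (u := n' * a + (a ^ 2 - a * b + b ^ 2 - m) * r)
      (v := n' * b + (a ^ 2 - a * b + b ^ 2 - m) * s) (by exact_mod_cast h₀) ?_
    linear_combination (-(a ^ 2 - a * b + b ^ 2 - m) ^ 2) * hrs -
      n' * (a ^ 2 - a * b + b ^ 2 - m) * ht'

theorem exists_eq_of_sq_mul_eq {t m u v : ℤ} (ht : t ≠ 0)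
    (h : t ^ 2 * m = u ^ 2 - u * v + v ^ 2) : ∃ a b : ℤ, m = a ^ 2 - a * b + b ^ 2 :=
  exists_eq_of_natCast_sq_mul_eq t.natAbs (u := u) (v := v) (Int.natAbs_pos.2 ht) (by rwa [Int.natAbs_sq])

theorem exists_eq_of_three_mul_eq {m u v : ℤ} (h : 3 * m = u ^ 2 - u * v + v ^ 2) :
    ∃ a b : ℤ, m = a ^ 2 - a * b + b ^ 2 := by
  obtain ⟨k, hk⟩ : (3 : ℤ) ∣ u + v :=
    Int.prime_three.dvd_of_dvd_pow (n := 2) ⟨m + u * v, by linear_combination -h⟩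
  obtain rfl : u = 3 * k - v := by linarith
  exact ⟨k, 2 * k - v, by linarith⟩

theorem two_dvd_and_two_dvd_of_two_dvd_sq_sub_mul_add_sq {u v : ℤ}
    (h : 2 ∣ u ^ 2 - u * v + v ^ 2) : 2 ∣ u ∧ 2 ∣ v := by
  have key : ∀ x y : ZMod 2, x ^ 2 - x * y + y ^ 2 = 0 → x = 0 ∧ y = 0 := by decide
  have := key u v (by exact_mod_cast (ZMod.intCast_zmod_eq_zero_iff_dvd _ 2).2 h)
  exact ⟨(ZMod.intCast_zmod_eq_zero_iff_dvd u 2).1 this.1,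
    (ZMod.intCast_zmod_eq_zero_iff_dvd v 2).1 this.2⟩

theorem exists_two_mul_eq_of_three_mul_mul_sq_eq {d c u v : ℤ} (hc : c ≠ 0)
    (h : 3 * d * c ^ 2 = 2 * (u ^ 2 - u * v + v ^ 2)) :
    ∃ a b : ℤ, 2 * (a ^ 2 - a * b + b ^ 2) = d := by
  obtain ⟨a, b, hab⟩ := exists_eq_of_sq_mul_eq hc (m := 6 * d) (u := 2 * u) (v := 2 * v)
    (by linear_combination 2 * h)
  obtain ⟨a', b', hab'⟩ := exists_eq_of_three_mul_eq (m := 2 * d) (u := a) (v := b) (by linear_combination hab)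
  obtain ⟨⟨a'', rfl⟩, ⟨b'', rfl⟩⟩ :=
    two_dvd_and_two_dvd_of_two_dvd_sq_sub_mul_add_sq ⟨d, hab'.symm⟩
  exact ⟨a'', b'', by linarith⟩

theorem le_sat {R M : Type*} [CommRing R] [IsDomain R] [AddCommGroup M] [Module R M]
    (N : Submodule R M) : N ≤ sat N :=
  fun x hx => ⟨1, one_ne_zero, by rwa [one_smul]⟩

section A2Lattice

variable {M : Type*} [AddCommGroup M] {B : LinearMap.BilinForm ℤ M} {r₁ r₂ v : M}

theorem apply_smul_add_smul_add_smul (hB : B.IsSymm) (h₁₁ : B r₁ r₁ = 2) (h₂₂ : B r₂ r₂ = 2)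
    (h₁₂ : B r₁ r₂ = -1) (h₁ : B r₁ v = 0) (h₂ : B r₂ v = 0) (a b c a' b' c' : ℤ) :
    B (a • r₁ + b • r₂ + c • v) (a' • r₁ + b' • r₂ + c' • v) =
      2 * a * a' - a * b' - b * a' + 2 * b * b' + c * c' * B v v := by
  have h₂₁ : B r₂ r₁ = -1 := by rw [hB.eq, h₁₂]
  simp only [LinearMap.BilinForm.add_left, LinearMap.BilinForm.add_right,
    LinearMap.BilinForm.smul_left, LinearMap.BilinForm.smul_right, h₁₁, h₂₂, h₁₂, h₂₁, h₁, h₂,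
    hB.eq v r₁, hB.eq v r₂]
  ring

theorem exists_two_mul_eq_of_isotropic_mem_sat (hB : B.IsSymm) (h₁₁ : B r₁ r₁ = 2)
    (h₂₂ : B r₂ r₂ = 2) (h₁₂ : B r₁ r₂ = -1) (h₁ : B r₁ v = 0) (h₂ : B r₂ v = 0) {d s : ℤ}
    (hv : s ^ 2 * B v v = -3 * d) {x y : M} (hx : x ∈ sat (Submodule.span ℤ {r₁, r₂, v}))
    (hxx : B x x = 0) (hxy : B x y ≠ 0) :
    ∃ a b : ℤ, 2 * (a ^ 2 - a * b + b ^ 2) = d := by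
  obtain ⟨n, hn, hnx⟩ := hx
  obtain ⟨a, b, c, hnx⟩ := Submodule.mem_span_triple.1 hnx
  have hq : 2 * (a ^ 2 - a * b + b ^ 2) + c ^ 2 * B v v = 0 := by
    have := apply_smul_add_smul_add_smul hB h₁₁ h₂₂ h₁₂ h₁ h₂ a b c a b c
    rw [hnx, LinearMap.BilinForm.smul_left, LinearMap.BilinForm.smul_right, hxx] at this
    linear_combination -this
  have hc : c ≠ 0 := by
    rintro rfl
    obtain ⟨rfl, rfl⟩ := (sq_sub_mul_add_sq_eq_zero (u := a) (v := b)).1 (by linarith)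
    have : B (n • x) y = 0 := by simp [← hnx]
    exact hxy (by simpa [hn] using this)
  exact exists_two_mul_eq_of_three_mul_mul_sq_eq hc (u := s * a) (v := s * b)
    (by linear_combination (-s ^ 2) * hq + c ^ 2 * hv)

theorem exists_isotropic_pair_mem_span (hB : B.IsSymm) (h₁₁ : B r₁ r₁ = 2)
    (h₂₂ : B r₂ r₂ = 2) (h₁₂ : B r₁ r₂ = -1) (h₁ : B r₁ v = 0) (h₂ : B r₂ v = 0) {d s : ℤ}
    (hv : s ^ 2 * B v v = -3 * d) {a b : ℤ} (hab : 2 * (a ^ 2 - a * b + b ^ 2) = d) :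
    ∃ x y : M, x ∈ Submodule.span ℤ {r₁, r₂, v} ∧ y ∈ Submodule.span ℤ {r₁, r₂, v} ∧
      B x x = 0 ∧ B y y = 0 ∧ B x y = 6 * d := by
  have hB' := apply_smul_add_smul_add_smul hB h₁₁ h₂₂ h₁₂ h₁ h₂ (a + b) (2 * b - a)
  refine ⟨(a + b) • r₁ + (2 * b - a) • r₂ + s • v, (a + b) • r₁ + (2 * b - a) • r₂ + (-s) • v,
    Submodule.mem_span_triple.2 ⟨_, _, _, rfl⟩, Submodule.mem_span_triple.2 ⟨_, _, _, rfl⟩,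
    ?_, ?_, ?_⟩ <;> rw [hB']
  · linear_combination 3 * hab + hv
  · linear_combination 3 * hab + hv
  · linear_combination 3 * hab - hv

theorem exists_isotropic_pair_mem_sat_iff (hB : B.IsSymm) (h₁₁ : B r₁ r₁ = 2)
    (h₂₂ : B r₂ r₂ = 2) (h₁₂ : B r₁ r₂ = -1) (h₁ : B r₁ v = 0) (h₂ : B r₂ v = 0) {d s : ℤ}
    (hv : s ^ 2 * B v v = -3 * d) (hd : d ≠ 0) :
    (∃ n : ℤ, n ≠ 0 ∧ ∃ x y : M, x ∈ sat (Submodule.span ℤ {r₁, r₂, v}) ∧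
      y ∈ sat (Submodule.span ℤ {r₁, r₂, v}) ∧ B x x = 0 ∧ B y y = 0 ∧ B x y = n) ↔
    ∃ a b : ℤ, 2 * (a ^ 2 - a * b + b ^ 2) = d := by
  constructor
  · rintro ⟨n, hn, x, y, hx, -, hxx, -, rfl⟩
    exact exists_two_mul_eq_of_isotropic_mem_sat hB h₁₁ h₂₂ h₁₂ h₁ h₂ hv hx hxx hn
  · rintro ⟨a, b, hab⟩
    obtain ⟨x, y, hx, hy, hxx, hyy, hxy⟩ :=
      exists_isotropic_pair_mem_span hB h₁₁ h₂₂ h₁₂ h₁ h₂ hv hab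
    exact ⟨6 * d, by omega, x, y, le_sat _ hx, le_sat _ hy, hxx, hyy, hxy⟩

end A2Lattice

theorem gramM_comm (i j : Fin 24) : gramM i j = gramM j i := by
  revert i j; decide

theorem MB_comm (x y : Fin 24 → ℤ) : MB x y = MB y x := by
  rw [MB, MB, Finset.sum_comm]
  refine Finset.sum_congr rfl fun i _ => Finset.sum_congr rfl fun j _ => ?_
  rw [gramM_comm]; ring

def mukaiForm : LinearMap.BilinForm ℤ (Fin 24 → ℤ) :=
  LinearMap.mk₂ ℤ MB MB_add_left MB_smul_left
    (fun x y z => by rw [MB_comm, MB_add_left, MB_comm y, MB_comm z])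
    (fun c x y => by rw [MB_comm, MB_smul_left, MB_comm, smul_eq_mul])

theorem mukaiForm_isSymm : mukaiForm.IsSymm := ⟨MB_comm⟩

@[simp] theorem mukaiForm_single_single (i j : Fin 24) (a b : ℤ) :
    mukaiForm (Pi.single i a) (Pi.single j b) = gramM i j * a * b := by
  simp [mukaiForm, MB, Pi.single_apply]

theorem mukaiForm_l1_l1 : mukaiForm l1 l1 = 2 := by simp [l1, gramM]

theorem mukaiForm_l2_l2 : mukaiForm l2 l2 = 2 := by simp [l2, gramM]

theorem mukaiForm_l1_l2 : mukaiForm l1 l2 = -1 := by simp [l1, l2, gramM]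

theorem mukaiForm_l1_vdM (d : ℤ) : mukaiForm l1 (vdM d) = 0 := by
  unfold vdM; split_ifs <;> simp [l1, m1, m2, gramM, -zsmul_eq_mul]

theorem mukaiForm_l2_vdM (d : ℤ) : mukaiForm l2 (vdM d) = 0 := by
  unfold vdM; split_ifs <;> simp [l2, m1, m2, gramM, -zsmul_eq_mul]

theorem exists_sq_mul_mukaiForm_vdM_self {d : ℤ} (h6 : d % 6 = 0 ∨ d % 6 = 2) :
    ∃ s : ℤ, s ^ 2 * mukaiForm (vdM d) (vdM d) = -3 * d := by
  rcases h6 with h | h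
  · exact ⟨3, by simp [vdM, h, gramM, -zsmul_eq_mul]; omega⟩
  · exact ⟨1, by simp [vdM, h, m1, m2, gramM, -zsmul_eq_mul]; omega⟩

/-- For a positive integer `d ≡ 0` or `2 (mod 6)`, the lattice `L_d` contains a
copy of `U(n)` for some `n ≠ 0` iff `d` is represented by `A₂`, i.e. `2(a² - ab + b²) = d`
for some integers `a, b`. -/
theorem stmt_8 (d : ℤ) (hd : 0 < d) (h6 : d % 6 = 0 ∨ d % 6 = 2) :
    (∃ n : ℤ, n ≠ 0 ∧ ∃ x y : Fin 24 → ℤ, x ∈ LdSub d ∧ y ∈ LdSub d ∧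
      MB x x = 0 ∧ MB y y = 0 ∧ MB x y = n) ↔
    (∃ a b : ℤ, 2 * (a ^ 2 - a * b + b ^ 2) = d) := by
  obtain ⟨s, hs⟩ := exists_sq_mul_mukaiForm_vdM_self h6
  exact exists_isotropic_pair_mem_sat_iff mukaiForm_isSymm mukaiForm_l1_l1 mukaiForm_l2_l2
    mukaiForm_l1_l2 (mukaiForm_l1_vdM d) (mukaiForm_l2_vdM d) hs hd.ne'
end

section
/- Let d be a positive even integer and let δ ∈ Λ_d satisfy (δ.δ) = −2 and (δ.w) ∈ 2ℤ for every w ∈ Λ_d. Then d ≡ 2 (mod 8), i.e. d/2 ≡ 1 (mod 4). -/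
open scoped BigOperators

noncomputable section

/-- The Gram matrix of the K3 lattice `Λ = E₈(-1)² ⊕ U₁ ⊕ U₂ ⊕ U₃` on `ℤ²²`. -/
def gramK : Fin 22 → Fin 22 → ℤ := fun i j =>
  if i.val < 8 ∧ j.val < 8 then
    E8M ⟨i.val % 8, Nat.mod_lt _ (by norm_num)⟩ ⟨j.val % 8, Nat.mod_lt _ (by norm_num)⟩
  else if 8 ≤ i.val ∧ i.val < 16 ∧ 8 ≤ j.val ∧ j.val < 16 then
    E8M ⟨(i.val - 8) % 8, Nat.mod_lt _ (by norm_num)⟩ ⟨(j.val - 8) % 8, Nat.mod_lt _ (by norm_num)⟩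
  else if (i.val = 16 ∧ j.val = 17) ∨ (i.val = 17 ∧ j.val = 16) ∨
      (i.val = 18 ∧ j.val = 19) ∨ (i.val = 19 ∧ j.val = 18) ∨
      (i.val = 20 ∧ j.val = 21) ∨ (i.val = 21 ∧ j.val = 20) then 1
  else 0

/-- The bilinear form of the K3 lattice `Λ`. -/
def KB (x y : Fin 22 → ℤ) : ℤ := ∑ i, ∑ j, gramK i j * x i * y j

/-- The class `ℓ = e₂ + (d/2) f₂ ∈ Λ`; its orthogonal complement is `Λ_d`. -/
def ell (d : ℤ) : Fin 22 → ℤ := Pi.single 18 1 + (d / 2) • Pi.single 19 1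

/-- Isometries of the K3 lattice `Λ`. -/
def IsIsomK (g : (Fin 22 → ℤ) ≃ₗ[ℤ] (Fin 22 → ℤ)) : Prop := ∀ x y, KB (g x) (g y) = KB x y

end

/-!
Put `e = d / 2`. The lattice `Λ_d` is `M ⊕ ℤ (e₂ - e f₂)` with `M = E₈(-1)² ⊕ U₁ ⊕ U₃`, which is even
and unimodular. As `(δ.w)` is even for every `w ∈ M`, unimodularity puts the `M`-component of `δ`
in `2M`, and evenness of `M` then makes its square divisible by `8`. Writing `δ₁₈, δ₁₉` for the
`e₂, f₂` coordinates of `δ`, this gives `-2 = (δ.δ) ≡ 2 δ₁₈ δ₁₉ = -2e δ₁₈² (mod 8)`, i.e.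
`e δ₁₈² ≡ 1 (mod 4)`, which forces `δ₁₈` odd and `e ≡ 1 (mod 4)`.
-/

open Matrix

section Unimodular

variable {n R : Type*} [Fintype n] [DecidableEq n] [CommRing R]

theorem dvd_apply_of_forall_dvd_dotProduct_mulVec {A : Matrix n n R} (hA : IsUnit A.det) {a : R}
    {v : n → R} (h : ∀ w, a ∣ v ⬝ᵥ (A *ᵥ w)) (i : n) : a ∣ v i := by
  have hv : v = (v ᵥ* A) ᵥ* A⁻¹ := by rw [vecMul_vecMul, mul_nonsing_inv _ hA, vecMul_one]
  rw [hv]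
  refine Finset.dvd_sum fun j _ => dvd_mul_of_dvd_left ?_ _
  simpa only [dotProduct_mulVec, dotProduct_single_one] using h (Pi.single j 1)

end Unimodular

section EvenForm

variable {n : Type*} [Fintype n] {A : Matrix n n ℤ}

theorem two_dvd_dotProduct_mulVec_self (hA : A.IsSymm) (hdiag : ∀ i, 2 ∣ A i i) (x : n → ℤ) :
    2 ∣ x ⬝ᵥ (A *ᵥ x) := by
  have hsum : x ⬝ᵥ (A *ᵥ x) = ∑ p : n × n, x p.1 * A p.1 p.2 * x p.2 := by
    simp [dotProduct, mulVec, Fintype.sum_prod_type, Finset.mul_sum, mul_assoc]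
  rw [hsum]
  refine (ZMod.intCast_zmod_eq_zero_iff_dvd _ 2).mp ?_
  rw [Int.cast_sum]
  refine Finset.sum_involution (fun p _ => p.swap) ?_ ?_ (by simp) (by simp)
  · rintro ⟨i, j⟩ -
    simp only [Prod.fst_swap, Prod.snd_swap, hA.apply]
    ring_nf
    exact mul_eq_zero_of_right _ rfl
  · rintro ⟨i, j⟩ - hne hswap
    obtain rfl : i = j := congrArg Prod.fst hswap.symm
    exact hne ((ZMod.intCast_zmod_eq_zero_iff_dvd _ 2).mpr ((hdiag i).mul_left _ |>.mul_right _))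

theorem eight_dvd_dotProduct_mulVec_self_of_two_dvd (hA : A.IsSymm) (hdiag : ∀ i, 2 ∣ A i i) {x : n → ℤ}
    (hx : ∀ i, 2 ∣ x i) : 8 ∣ x ⬝ᵥ (A *ᵥ x) := by
  choose y hy using hx
  obtain rfl : x = (2 : ℤ) • y := funext hy
  obtain ⟨m, hm⟩ := two_dvd_dotProduct_mulVec_self hA hdiag y
  exact ⟨m, by simp only [smul_dotProduct, mulVec_smul, dotProduct_smul, hm, smul_eq_mul]; ring⟩

end EvenForm

theorem E8M_det : E8M.det = 1 := by
  simp [E8M, det_neg, CartanMatrix.E₈_det]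

theorem E8M_isSymm : E8M.IsSymm :=
  CartanMatrix.E₈_isSymm.neg

theorem two_dvd_E8M_diag (i : Fin 8) : 2 ∣ E8M i i := by
  simp [E8M]

def e8Part₁ (x : Fin 22 → ℤ) : Fin 8 → ℤ := fun i => x ⟨i, by omega⟩

def e8Part₂ (x : Fin 22 → ℤ) : Fin 8 → ℤ := fun i => x ⟨i + 8, by omega⟩

def e8Embed₁ (b : Fin 8 → ℤ) : Fin 22 → ℤ := fun i => if h : i.val < 8 then b ⟨i, h⟩ else 0

def e8Embed₂ (b : Fin 8 → ℤ) : Fin 22 → ℤ :=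
  fun i => if h : 8 ≤ i.val ∧ i.val < 16 then b ⟨i - 8, by omega⟩ else 0

theorem KB_eq_blocks (x y : Fin 22 → ℤ) :
    KB x y = e8Part₁ x ⬝ᵥ (E8M *ᵥ e8Part₁ y) + e8Part₂ x ⬝ᵥ (E8M *ᵥ e8Part₂ y)
      + (x 16 * y 17 + x 17 * y 16) + (x 18 * y 19 + x 19 * y 18) + (x 20 * y 21 + x 21 * y 20) := by
  simp only [KB, gramK, e8Part₁, e8Part₂, dotProduct, mulVec, Fin.sum_univ_succ, Fin.sum_univ_zero]
  simp [E8M, CartanMatrix.E₈]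
  ring

theorem KB_ell (d : ℤ) (w : Fin 22 → ℤ) : KB (ell d) w = w 19 + d / 2 * w 18 := by
  have h₁ : e8Part₁ (ell d) = 0 := by
    funext i
    have := i.isLt
    simp only [e8Part₁, ell, Pi.add_apply, Pi.smul_apply, Pi.single_apply, Fin.ext_iff]
    split_ifs <;> simp_all
  have h₂ : e8Part₂ (ell d) = 0 := by
    funext i
    have := i.isLt
    simp only [e8Part₂, ell, Pi.add_apply, Pi.smul_apply, Pi.single_apply, Fin.ext_iff]
    split_ifs <;> simp_all <;> omega
  rw [KB_eq_blocks, h₁, h₂]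
  simp [ell]

theorem KB_e8Embed₁ (x : Fin 22 → ℤ) (b : Fin 8 → ℤ) :
    KB x (e8Embed₁ b) = e8Part₁ x ⬝ᵥ (E8M *ᵥ b) := by
  have h₁ : e8Part₁ (e8Embed₁ b) = b := by
    funext i
    simp [e8Part₁, e8Embed₁]
  have h₂ : e8Part₂ (e8Embed₁ b) = 0 := by
    funext i
    simp [e8Part₂, e8Embed₁]
  simp [KB_eq_blocks, h₁, h₂, e8Embed₁]

theorem KB_e8Embed₂ (x : Fin 22 → ℤ) (b : Fin 8 → ℤ) :
    KB x (e8Embed₂ b) = e8Part₂ x ⬝ᵥ (E8M *ᵥ b) := by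
  have h₁ : e8Part₁ (e8Embed₂ b) = 0 := by
    funext i
    simp [e8Part₁, e8Embed₂]
  have h₂ : e8Part₂ (e8Embed₂ b) = b := by
    funext i
    simp [e8Part₂, e8Embed₂]
  simp [KB_eq_blocks, h₁, h₂, e8Embed₂]

theorem KB_single (x : Fin 22 → ℤ) (j : Fin 22) : KB x (Pi.single j 1) = ∑ i, gramK i j * x i := by
  simp [KB, Pi.single_apply]

theorem eight_dvd_KB_self_sub (d : ℤ) (δ : Fin 22 → ℤ)
    (hdiv : ∀ w : Fin 22 → ℤ, KB (ell d) w = 0 → (2 : ℤ) ∣ KB δ w) :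
    8 ∣ KB δ δ - 2 * δ 18 * δ 19 := by
  have hE8 : IsUnit E8M.det := by rw [E8M_det]; exact isUnit_one
  have h₁ : ∀ i, 2 ∣ e8Part₁ δ i := dvd_apply_of_forall_dvd_dotProduct_mulVec hE8 fun b => by
    simpa only [KB_e8Embed₁] using hdiv (e8Embed₁ b) (by simp [KB_ell, e8Embed₁])
  have h₂ : ∀ i, 2 ∣ e8Part₂ δ i := dvd_apply_of_forall_dvd_dotProduct_mulVec hE8 fun b => by
    simpa only [KB_e8Embed₂] using hdiv (e8Embed₂ b) (by simp [KB_ell, e8Embed₂])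
  have hU (i j : Fin 22) (hj : KB δ (Pi.single j 1) = δ i) (hj18 : j ≠ 18) (hj19 : j ≠ 19) :
      2 ∣ δ i :=
    hj ▸ hdiv _ (by simp [KB_ell, hj18.symm, hj19.symm])
  have h16 := hU 16 17 (by simp [KB_single, Fin.sum_univ_succ, gramK]) (by decide) (by decide)
  have h17 := hU 17 16 (by simp [KB_single, Fin.sum_univ_succ, gramK]) (by decide) (by decide)
  have h20 := hU 20 21 (by simp [KB_single, Fin.sum_univ_succ, gramK]) (by decide) (by decide)
  have h21 := hU 21 20 (by simp [KB_single, Fin.sum_univ_succ, gramK]) (by decide) (by decide)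
  have hQ₁ := eight_dvd_dotProduct_mulVec_self_of_two_dvd E8M_isSymm two_dvd_E8M_diag h₁
  have hQ₂ := eight_dvd_dotProduct_mulVec_self_of_two_dvd E8M_isSymm two_dvd_E8M_diag h₂
  obtain ⟨a, ha⟩ := h16
  obtain ⟨b, hb⟩ := h17
  obtain ⟨c, hc⟩ := h20
  obtain ⟨e, he⟩ := h21
  have hU₁ : 8 ∣ δ 16 * δ 17 + δ 17 * δ 16 := ⟨a * b, by rw [ha, hb]; ring⟩
  have hU₃ : 8 ∣ δ 20 * δ 21 + δ 21 * δ 20 := ⟨c * e, by rw [hc, he]; ring⟩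
  have hsplit : KB δ δ - 2 * δ 18 * δ 19 = e8Part₁ δ ⬝ᵥ (E8M *ᵥ e8Part₁ δ)
      + e8Part₂ δ ⬝ᵥ (E8M *ᵥ e8Part₂ δ) + (δ 16 * δ 17 + δ 17 * δ 16)
      + (δ 20 * δ 21 + δ 21 * δ 20) := by
    rw [KB_eq_blocks]; ring
  rw [hsplit]
  exact dvd_add (dvd_add (dvd_add hQ₁ hQ₂) hU₁) hU₃

theorem Int.emod_four_eq_one_of_mul_sq {e t : ℤ} (h : e * t ^ 2 % 4 = 1) : e % 4 = 1 := by
  obtain ⟨s, rfl | rfl⟩ := Int.even_or_odd' t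
  · have : e * (2 * s) ^ 2 = 4 * (e * s ^ 2) := by ring
    omega
  · have : e * (2 * s + 1) ^ 2 = e + 4 * (e * (s * (s + 1))) := by ring
    omega

theorem stmt_10_general (d : ℤ) (heven : 2 ∣ d) (δ : Fin 22 → ℤ)
    (hmem : KB (ell d) δ = 0) (hsq : KB δ δ = -2)
    (hdiv : ∀ w : Fin 22 → ℤ, KB (ell d) w = 0 → (2 : ℤ) ∣ KB δ w) :
    d % 8 = 2 := by
  obtain ⟨e, rfl⟩ := heven
  rw [KB_ell, Int.mul_ediv_cancel_left e two_ne_zero] at hmem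
  obtain ⟨m, hm⟩ := eight_dvd_KB_self_sub (2 * e) δ hdiv
  have hδ19 : δ 19 = -(e * δ 18) := by linarith
  have hsq' : e * δ 18 ^ 2 = 4 * m + 1 := by
    rw [hsq, hδ19] at hm
    linarith
  have he : e % 4 = 1 := Int.emod_four_eq_one_of_mul_sq (t := δ 18) (by omega)
  omega

/-- If `δ ∈ Λ_d` satisfies `(δ.δ) = -2` and `(δ.w) ∈ 2ℤ` for all `w ∈ Λ_d`,
then `d ≡ 2 (mod 8)`. -/
theorem stmt_10 (d : ℤ) (hd : 0 < d) (heven : 2 ∣ d) (δ : Fin 22 → ℤ)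
    (hmem : KB (ell d) δ = 0) (hsq : KB δ δ = -2)
    (hdiv : ∀ w : Fin 22 → ℤ, KB (ell d) w = 0 → (2 : ℤ) ∣ KB δ w) :
    d % 8 = 2 :=
  stmt_10_general d heven δ hmem hsq hdiv
end

section
/- Let d be a positive even integer with d ≡ 2 (mod 8). Then the set Δ_d := {δ ∈ Λ_d : (δ.δ) = −2} decomposes into exactly two orbits under the group of ℤ-linear isometries g : Λ → Λ with g(ℓ) = ℓ (acting on Λ_d by restriction); representatives of the two orbits are δ₀ := e₁ − f₁ and δ₁ := 2e₁ + ((d/2 − 1)/2)f₁ + e₂ − (d/2)f₂. -/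
open scoped BigOperators

/-- `δ₀ = e₁ - f₁`. -/
def del0 : Fin 22 → ℤ := Pi.single 16 1 - Pi.single 17 1

/-- `δ₁ = 2e₁ + ((d/2 - 1)/2) f₁ + e₂ - (d/2) f₂`. -/
def del1 (d : ℤ) : Fin 22 → ℤ :=
  (2 : ℤ) • Pi.single 16 1 + ((d / 2 - 1) / 2) • Pi.single 17 1 +
    Pi.single 18 1 - (d / 2) • Pi.single 19 1

/-!
Write `⟨x, y⟩` for the form of `Λ`. For isotropic `e` and `a ⊥ e`, the Eichler transvection
`x ↦ x + ⟨x, e⟩ a - (⟨x, a⟩ + ½⟨a, a⟩⟨x, e⟩) e` is an isometry of `Λ` (which is even), and it fixes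
`ℓ` when `e, a ⊥ ℓ`. In the orbit of `δ ∈ Δ_d` choose `δ` with `b := ⟨δ, e₁⟩ ≠ 0` of least absolute
value. Euclid's algorithm, run with transvections along `e₁`, `f₁` and the hyperbolic plane `U₃`,
shows that `b` divides `⟨δ, y⟩` for every `y ∈ Λ_d`; in particular `b ∣ ⟨δ, δ⟩ = -2`. Since `E₈` is
unimodular, one more transvection along `e₁` moves `δ` to `a e₁ + b f₁ + t (e₂ - (d/2) f₂)` with
`0 ≤ t < |b|`, and `2ab - d t² = -2` leaves `±δ₀` and two vectors that the reflections in `e₁ ∓ f₁`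
carry to `δ₁`. The orbits differ because `δ₁ + ℓ ∈ 2Λ` when `d ≡ 2 (mod 8)`, while `δ₀ + ℓ ∉ 2Λ`.
-/

open LinearMap (BilinForm)

section Eichler

variable {R M : Type*} [CommRing R] [AddCommGroup M] [Module R M] (B : BilinForm R M)

def eichlerTransvection (e a : M) (m : R) : M →ₗ[R] M :=
  LinearMap.id + (B.flip e).smulRight a - (B.flip a + m • B.flip e).smulRight e

@[simp]
lemma eichlerTransvection_apply (e a : M) (m : R) (x : M) :
    eichlerTransvection B e a m x = x + B x e • a - (B x a + m * B x e) • e := by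
  simp [eichlerTransvection]

variable {B} {e a : M} {m : R}

lemma eichlerTransvection_eichlerTransvection_neg (hB : B.IsSymm) (he : B e e = 0) (hae : B a e = 0)
    (ha : B a a = 2 * m) (x : M) :
    eichlerTransvection B e a m (eichlerTransvection B e (-a) m x) = x := by
  have hea : B e a = 0 := by rw [hB.eq, hae]
  simp only [eichlerTransvection_apply, map_add, map_sub, map_smul, map_neg, he, hae, hea, ha]
  module

def eichlerTransvectionEquiv (hB : B.IsSymm) (he : B e e = 0) (hae : B a e = 0)
    (ha : B a a = 2 * m) : M ≃ₗ[R] M :=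
  LinearEquiv.ofLinearMap (eichlerTransvection B e a m) (eichlerTransvection B e (-a) m)
    (LinearMap.ext (eichlerTransvection_eichlerTransvection_neg hB he hae ha))
    (LinearMap.ext fun x => by
      simpa using eichlerTransvection_eichlerTransvection_neg (a := -a) hB he (by simpa using hae)
        (by simpa using ha) x)

@[simp]
lemma eichlerTransvectionEquiv_apply (hB : B.IsSymm) (he : B e e = 0) (hae : B a e = 0)
    (ha : B a a = 2 * m) (x : M) :
    eichlerTransvectionEquiv hB he hae ha x = eichlerTransvection B e a m x :=
  rfl

lemma eichlerTransvection_isometry (hB : B.IsSymm) (he : B e e = 0) (hae : B a e = 0)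
    (ha : B a a = 2 * m) (x y : M) :
    B (eichlerTransvection B e a m x) (eichlerTransvection B e a m y) = B x y := by
  have hea : B e a = 0 := by rw [hB.eq, hae]
  simp only [eichlerTransvection_apply, map_add, map_sub, map_smul, LinearMap.add_apply,
    LinearMap.sub_apply, LinearMap.smul_apply, smul_eq_mul, he, hae, hea, ha]
  rw [hB.eq e y, hB.eq a y]
  ring

lemma reflection_isometry (hB : B.IsSymm) {v : M} {ε : R} (h : (ε • B.flip v) v = 2) (x y : M) :
    B (Module.reflection h x) (Module.reflection h y) = B x y := by
  have hv : ε * B v v = 2 := by simpa using h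
  simp only [Module.reflection_apply, LinearMap.smul_apply, BilinForm.flip_apply, smul_eq_mul,
    map_sub, map_smul, LinearMap.sub_apply]
  rw [hB.eq v y]
  linear_combination ε * B x v * B y v * hv

end Eichler

lemma two_dvd_apply_self {ι : Type*} [Fintype ι] [DecidableEq ι] (B : BilinForm ℤ (ι → ℤ))
    (hB : B.IsSymm) (h : ∀ i, 2 ∣ B (Pi.single i 1) (Pi.single i 1)) (x : ι → ℤ) :
    2 ∣ B x x := by
  rw [← Finset.univ_sum_single x]
  refine Finset.sum_induction _ (fun y => 2 ∣ B y y) (fun y z hy hz => ?_) (by simp)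
    fun i _ => ?_
  · have hyz : B (y + z) (y + z) = B y y + B z z + 2 * B y z := by
      simp only [map_add, LinearMap.add_apply, hB.eq z y]
      ring
    rw [hyz]
    exact dvd_add (dvd_add hy hz) (dvd_mul_right _ _)
  · rw [← mul_one (x i), ← smul_eq_mul, Pi.single_smul']
    simp only [map_smul, LinearMap.smul_apply, smul_eq_mul]
    exact ((h i).mul_left _).mul_left _

lemma MulAction.mem_orbit_trans {G α : Type*} [Group G] [MulAction G α] {x y z : α}
    (hxy : y ∈ orbit G x) (hyz : z ∈ orbit G y) : z ∈ orbit G x :=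
  MulAction.orbit_eq_iff.2 hxy ▸ hyz

lemma Int.exists_sub_mul_ne_zero_natAbs_lt {b r : ℤ} (hr : 0 < r) (hrb : r < |b|) :
    ∃ j, b - j * r ≠ 0 ∧ (b - j * r).natAbs < b.natAbs := by
  have hb : |b| = (b.natAbs : ℤ) := Int.abs_eq_natAbs b
  by_cases hdvd : r ∣ b
  · refine ⟨b / r - 1, ?_, ?_⟩ <;> rw [sub_mul, Int.ediv_mul_cancel hdvd] <;> omega
  · refine ⟨b / r, ?_, ?_⟩ <;> rw [mul_comm, ← Int.emod_def]
    · exact fun h => hdvd (Int.dvd_of_emod_eq_zero h)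
    · have := Int.emod_lt_of_pos b hr
      have := Int.emod_nonneg b hr.ne'
      omega

namespace K3

local notation "Λ" => Fin 22 → ℤ

-- `Λ` is a ring, and `simp` would otherwise rewrite `n • x` to the pointwise product `↑n * x`.
attribute [-simp] zsmul_eq_mul

open MulAction

def kb : BilinForm ℤ Λ := Matrix.toLinearMap₂' ℤ (Matrix.of gramK)

lemma kb_apply (x y : Λ) : kb x y = KB x y := by
  simp only [kb, Matrix.toLinearMap₂'_apply, Matrix.of_apply, smul_eq_mul, KB]
  exact Finset.sum_congr rfl fun i _ => Finset.sum_congr rfl fun j _ => by ring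

lemma kb_single (x : Λ) (j : Fin 22) : kb x (Pi.single j 1) = ∑ i, x i * gramK i j := by
  simp [kb, Matrix.toLinearMap₂'_apply', dotProduct]

lemma kb_single_single (i j : Fin 22) : kb (Pi.single i 1) (Pi.single j 1) = gramK i j := by
  simp [kb_single, Pi.single_apply]

lemma kb_isSymm : kb.IsSymm := by
  have hsymm : ∀ i j, gramK i j = gramK j i := by decide
  refine ⟨fun x y => ?_⟩
  simp only [kb_apply, KB]
  rw [Finset.sum_comm]
  exact Finset.sum_congr rfl fun i _ => Finset.sum_congr rfl fun j _ => by rw [hsymm]; ring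

lemma two_dvd_kb_self (x : Λ) : 2 ∣ kb x x :=
  two_dvd_apply_self kb kb_isSymm (fun i => by rw [kb_single_single]; revert i; decide) x

lemma kb_single_of_gramK {i j : Fin 22} (h : ∀ k, gramK k j = if k = i then 1 else 0) (x : Λ) :
    kb x (Pi.single j 1) = x i := by
  simp [kb_single, h]

def e₁ : Λ := Pi.single 16 1
def f₁ : Λ := Pi.single 17 1
def e₃ : Λ := Pi.single 20 1
def f₃ : Λ := Pi.single 21 1
def ellPerp (d : ℤ) : Λ := Pi.single 18 1 - (d / 2) • Pi.single 19 1

lemma kb_e₁ (x : Λ) : kb x e₁ = x 17 := kb_single_of_gramK (by decide) x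
lemma kb_f₁ (x : Λ) : kb x f₁ = x 16 := kb_single_of_gramK (by decide) x
lemma kb_e₃ (x : Λ) : kb x e₃ = x 21 := kb_single_of_gramK (by decide) x
lemma kb_f₃ (x : Λ) : kb x f₃ = x 20 := kb_single_of_gramK (by decide) x

@[simp] lemma kb_U₁_U₁ : kb e₁ e₁ = 0 ∧ kb e₁ f₁ = 1 ∧ kb f₁ e₁ = 1 ∧ kb f₁ f₁ = 0 := by
  simp only [kb_e₁, kb_f₁]; decide

@[simp] lemma kb_U₃_U₃ : kb e₃ e₃ = 0 ∧ kb e₃ f₃ = 1 ∧ kb f₃ e₃ = 1 ∧ kb f₃ f₃ = 0 := by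
  simp only [kb_e₃, kb_f₃]; decide

@[simp] lemma kb_U₁_U₃ : kb e₁ e₃ = 0 ∧ kb e₁ f₃ = 0 ∧ kb f₁ e₃ = 0 ∧ kb f₁ f₃ = 0 ∧
    kb e₃ e₁ = 0 ∧ kb e₃ f₁ = 0 ∧ kb f₃ e₁ = 0 ∧ kb f₃ f₁ = 0 := by
  simp only [kb_e₁, kb_f₁, kb_e₃, kb_f₃]; decide

lemma kb_single_18 (x : Λ) : kb x (Pi.single 18 1) = x 19 := kb_single_of_gramK (by decide) x
lemma kb_single_19 (x : Λ) : kb x (Pi.single 19 1) = x 18 := kb_single_of_gramK (by decide) x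

lemma kb_ellPerp (d : ℤ) (x : Λ) : kb x (ellPerp d) = x 19 - d / 2 * x 18 := by
  simp only [ellPerp, map_sub, map_smul, smul_eq_mul, kb_single_18, kb_single_19]

lemma kb_ell (d : ℤ) (x : Λ) : kb (ell d) x = x 19 + d / 2 * x 18 := by
  rw [kb_isSymm.eq]
  simp only [ell, map_add, map_smul, smul_eq_mul, kb_single_18, kb_single_19]

@[simp] lemma kb_ell_U (d : ℤ) :
    kb (ell d) e₁ = 0 ∧ kb (ell d) f₁ = 0 ∧ kb (ell d) e₃ = 0 ∧ kb (ell d) f₃ = 0 := by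
  simp only [kb_e₁, kb_f₁, kb_e₃, kb_f₃, ell]; simp

@[simp] lemma kb_ellPerp_U₁ (d : ℤ) : kb (ellPerp d) e₁ = 0 ∧ kb (ellPerp d) f₁ = 0 ∧
    kb e₁ (ellPerp d) = 0 ∧ kb f₁ (ellPerp d) = 0 := by
  simp only [kb_e₁, kb_f₁, kb_ellPerp]; simp [ellPerp, e₁, f₁]

@[simp] lemma kb_ell_ellPerp (d : ℤ) : kb (ell d) (ellPerp d) = 0 := by
  rw [kb_ell]; simp [ellPerp]

lemma kb_ellPerp_self (d : ℤ) : kb (ellPerp d) (ellPerp d) = -2 * (d / 2) := by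
  rw [kb_ellPerp]; simp [ellPerp]; ring

-- The inverse of `E8M`: the `E₈` lattice is unimodular.
def gramInvE8 : Matrix (Fin 8) (Fin 8) ℤ :=
  !![-4, -5, -7, -10, -8, -6, -4, -2;
     -5, -8, -10, -15, -12, -9, -6, -3;
     -7, -10, -14, -20, -16, -12, -8, -4;
     -10, -15, -20, -30, -24, -18, -12, -6;
     -8, -12, -16, -24, -20, -15, -10, -5;
     -6, -9, -12, -18, -15, -12, -8, -4;
     -4, -6, -8, -12, -10, -8, -6, -3;
     -2, -3, -4, -6, -5, -4, -3, -2]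

def gramInv : Fin 22 → Fin 22 → ℤ := fun i j =>
  if i.val < 8 ∧ j.val < 8 then
    gramInvE8 ⟨i.val % 8, Nat.mod_lt _ (by norm_num)⟩ ⟨j.val % 8, Nat.mod_lt _ (by norm_num)⟩
  else if 8 ≤ i.val ∧ i.val < 16 ∧ 8 ≤ j.val ∧ j.val < 16 then
    gramInvE8 ⟨(i.val - 8) % 8, Nat.mod_lt _ (by norm_num)⟩
      ⟨(j.val - 8) % 8, Nat.mod_lt _ (by norm_num)⟩
  else 0

lemma sum_gramInv_mul_gramK : ∀ i k : Fin 22, i.val < 16 →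
    ∑ j, gramInv i j * gramK k j = if k = i then 1 else 0 := by
  decide

lemma gramInv_eq_zero : ∀ i j : Fin 22, ¬ j.val < 16 → gramInv i j = 0 := by
  decide

lemma dvd_apply_of_dvd_kb_single {c : ℤ} {x : Λ}
    (h : ∀ j : Fin 22, j.val < 16 → c ∣ kb x (Pi.single j 1)) {i : Fin 22} (hi : i.val < 16) :
    c ∣ x i := by
  have hx : ∑ j, gramInv i j * kb x (Pi.single j 1) = x i := by
    simp_rw [kb_single, Finset.mul_sum]
    rw [Finset.sum_comm]
    have hk : ∀ k, ∑ j, gramInv i j * (x k * gramK k j) = x k * if k = i then 1 else 0 := by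
      intro k
      rw [← sum_gramInv_mul_gramK i k hi, Finset.mul_sum]
      exact Finset.sum_congr rfl fun j _ => by ring
    simp [hk]
  rw [← hx]
  refine Finset.dvd_sum fun j _ => ?_
  by_cases hj : j.val < 16
  · exact (h j hj).mul_left _
  · simp [gramInv_eq_zero i j hj]

def ellStab (d : ℤ) : Subgroup (Λ ≃ₗ[ℤ] Λ) where
  carrier := {g | IsIsomK g ∧ g (ell d) = ell d}
  mul_mem' {g h} hg hh := ⟨fun x y => (hg.1 _ _).trans (hh.1 x y), by simp [hg.2, hh.2]⟩
  one_mem' := ⟨fun _ _ => rfl, rfl⟩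
  inv_mem' {g} hg := by
    refine ⟨fun x y => ?_, ?_⟩
    · rw [← hg.1]; simp
    · conv_lhs => rw [← hg.2]
      exact g.symm_apply_apply _

variable {d : ℤ}

lemma mem_orbit_ellStab_iff {x y : Λ} :
    y ∈ orbit (ellStab d) x ↔ ∃ g : Λ ≃ₗ[ℤ] Λ, IsIsomK g ∧ g (ell d) = ell d ∧ g x = y :=
  ⟨fun ⟨g, hg⟩ => ⟨g, g.2.1, g.2.2, hg⟩, fun ⟨g, hg, hgℓ, hgx⟩ => ⟨⟨g, hg, hgℓ⟩, hgx⟩⟩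

lemma mem_orbit_of_isometry (g : Λ ≃ₗ[ℤ] Λ) (hg : ∀ x y, kb (g x) (g y) = kb x y)
    (hgℓ : g (ell d) = ell d) (x : Λ) : g x ∈ orbit (ellStab d) x :=
  mem_orbit_ellStab_iff.2 ⟨g, fun x y => by simpa only [kb_apply] using hg x y, hgℓ, rfl⟩

lemma kb_ell_eq_of_mem_orbit {x y : Λ} (h : y ∈ orbit (ellStab d) x) :
    kb (ell d) y = kb (ell d) x := by
  obtain ⟨g, hgx, hgℓ, rfl⟩ := mem_orbit_ellStab_iff.1 h
  rw [kb_apply, kb_apply]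
  conv_lhs => rw [← hgℓ]
  exact hgx _ _

lemma kb_self_eq_of_mem_orbit {x y : Λ} (h : y ∈ orbit (ellStab d) x) : kb y y = kb x x := by
  obtain ⟨g, hgx, -, rfl⟩ := mem_orbit_ellStab_iff.1 h
  rw [kb_apply, kb_apply, hgx]

def eichler (e a : Λ) : Λ →ₗ[ℤ] Λ := eichlerTransvection kb e a (kb a a / 2)

lemma eichler_apply (e a x : Λ) :
    eichler e a x = x + kb x e • a - (kb x a + kb a a / 2 * kb x e) • e :=
  eichlerTransvection_apply _ _ _ _ _

lemma eichler_mem_orbit {e a : Λ} (he : kb e e = 0) (hae : kb a e = 0)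
    (hℓe : kb (ell d) e = 0) (hℓa : kb (ell d) a = 0) (x : Λ) :
    eichler e a x ∈ orbit (ellStab d) x := by
  have ha : kb a a = 2 * (kb a a / 2) := (Int.mul_ediv_cancel' (two_dvd_kb_self a)).symm
  exact mem_orbit_of_isometry (eichlerTransvectionEquiv kb_isSymm he hae ha)
    (eichlerTransvection_isometry kb_isSymm he hae ha) (by simp [hℓe, hℓa]) x

lemma reflection_mem_orbit {v : Λ} {ε : ℤ} (h : (ε • kb.flip v) v = 2) (hℓv : kb (ell d) v = 0)
    (x : Λ) : Module.reflection h x ∈ orbit (ellStab d) x :=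
  mem_orbit_of_isometry _ (reflection_isometry kb_isSymm h)
    (by simp [Module.reflection_apply, hℓv]) x

lemma del0_eq : del0 = e₁ - f₁ := rfl

lemma del1_eq : del1 d = (2 : ℤ) • e₁ + ((d / 2 - 1) / 2) • f₁ + ellPerp d := by
  rw [del1, ellPerp, e₁, f₁, add_sub_assoc]

def swapU₁ : Λ ≃ₗ[ℤ] Λ :=
  Module.reflection (x := del0) (f := (-1 : ℤ) • kb.flip del0) (by simp [del0_eq])

def negSwapU₁ : Λ ≃ₗ[ℤ] Λ :=
  Module.reflection (x := e₁ + f₁) (f := (1 : ℤ) • kb.flip (e₁ + f₁)) (by simp)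

lemma swapU₁_mem_orbit (x : Λ) : swapU₁ x ∈ orbit (ellStab d) x :=
  reflection_mem_orbit _ (by simp [del0_eq]) x

lemma negSwapU₁_mem_orbit (x : Λ) : negSwapU₁ x ∈ orbit (ellStab d) x :=
  reflection_mem_orbit _ (by simp) x

lemma swapU₁_apply (a b : ℤ) {w : Λ} (hwe : kb w e₁ = 0) (hwf : kb w f₁ = 0) :
    swapU₁ (a • e₁ + b • f₁ + w) = b • e₁ + a • f₁ + w := by
  simp [swapU₁, Module.reflection_apply, del0_eq, hwe, hwf]
  module

lemma negSwapU₁_apply (a b : ℤ) {w : Λ} (hwe : kb w e₁ = 0) (hwf : kb w f₁ = 0) :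
    negSwapU₁ (a • e₁ + b • f₁ + w) = (-b) • e₁ + (-a) • f₁ + w := by
  simp [negSwapU₁, Module.reflection_apply, hwe, hwf]
  module

def HasMinimalE₁Pairing (d : ℤ) (δ : Λ) : Prop :=
  kb δ e₁ ≠ 0 ∧ ∀ δ' ∈ orbit (ellStab d) δ, kb δ' e₁ ≠ 0 → (kb δ e₁).natAbs ≤ (kb δ' e₁).natAbs

namespace HasMinimalE₁Pairing

variable {δ : Λ}

lemma of_mem_orbit (h : HasMinimalE₁Pairing d δ) {δ' : Λ} (hδ' : δ' ∈ orbit (ellStab d) δ)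
    (he : kb δ' e₁ = kb δ e₁) : HasMinimalE₁Pairing d δ' :=
  ⟨he ▸ h.1, fun δ'' h'' hne => he ▸ h.2 δ'' (mem_orbit_trans hδ' h'') hne⟩

lemma dvd_kb_of_hyperbolic (h : HasMinimalE₁Pairing d δ) {u v : Λ} (hu : kb u u = 0)
    (hvu : kb v u = 1) (hue : kb u e₁ = 0) (huf : kb u f₁ = 0) (hve : kb v e₁ = 0)
    (hℓu : kb (ell d) u = 0) (hℓv : kb (ell d) v = 0) : kb δ e₁ ∣ kb δ u := by
  have heu : kb e₁ u = 0 := by rw [kb_isSymm.eq, hue]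
  -- Euclid: `E(e₁, k v)` reduces `⟨δ, u⟩` modulo `b`, then `E(f₁, j u)` replaces `b` by
  -- `b - j (⟨δ, u⟩ % b)`.
  set δ₁ := eichler e₁ (-(kb δ u / kb δ e₁) • v) δ
  have h₁ : δ₁ ∈ orbit (ellStab d) δ :=
    eichler_mem_orbit (by simp) (by simp [hve]) (by simp) (by simp [hℓv]) δ
  have hδ₁e : kb δ₁ e₁ = kb δ e₁ := by simp [δ₁, eichler_apply, hve]
  have hδ₁u : kb δ₁ u = kb δ u % kb δ e₁ := by
    simp [δ₁, eichler_apply, hvu, heu, Int.emod_def]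
    ring
  rw [Int.dvd_iff_emod_eq_zero]
  by_contra hr
  obtain ⟨j, hj, hlt⟩ := Int.exists_sub_mul_ne_zero_natAbs_lt
    (lt_of_le_of_ne (Int.emod_nonneg _ h.1) (Ne.symm hr)) (Int.emod_lt_abs _ h.1)
  set δ₂ := eichler f₁ (j • u) δ₁
  have h₂ : δ₂ ∈ orbit (ellStab d) δ₁ :=
    eichler_mem_orbit (by simp) (by simp [huf]) (by simp) (by simp [hℓu]) δ₁
  have hδ₂e : kb δ₂ e₁ = kb δ e₁ - j * (kb δ u % kb δ e₁) := by
    simp [δ₂, eichler_apply, hu, hue, hδ₁e, hδ₁u]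
  exact absurd (h.2 δ₂ (mem_orbit_trans h₁ h₂) (hδ₂e ▸ hj)) (by rw [hδ₂e]; omega)

lemma dvd_kb_f₃ (h : HasMinimalE₁Pairing d δ) : kb δ e₁ ∣ kb δ f₃ :=
  h.dvd_kb_of_hyperbolic (v := e₃) (by simp) (by simp) (by simp) (by simp) (by simp) (by simp)
    (by simp)

lemma dvd_kb_e₃ (h : HasMinimalE₁Pairing d δ) : kb δ e₁ ∣ kb δ e₃ :=
  h.dvd_kb_of_hyperbolic (v := f₃) (by simp) (by simp) (by simp) (by simp) (by simp) (by simp)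
    (by simp)

lemma dvd_kb_f₁ (h : HasMinimalE₁Pairing d δ) : kb δ e₁ ∣ kb δ f₁ := by
  -- Clear `⟨δ, e₃⟩`; then `E(f₁, e₃)` adds `⟨δ, f₁⟩` to `⟨δ, f₃⟩` and keeps `b`.
  set k := -(kb δ e₃ / kb δ e₁)
  set δ₁ := eichler e₁ (k • f₃) δ
  have h₁ : δ₁ ∈ orbit (ellStab d) δ := eichler_mem_orbit (by simp) (by simp) (by simp) (by simp) δ
  have hδ₁e : kb δ₁ e₁ = kb δ e₁ := by simp [δ₁, eichler_apply]
  have hδ₁e₃ : kb δ₁ e₃ = 0 := by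
    simp [δ₁, eichler_apply, k, Int.mul_ediv_cancel' h.dvd_kb_e₃]
  have hδ₁f₁ : kb δ₁ f₁ = kb δ f₁ - k * kb δ f₃ := by simp [δ₁, eichler_apply]
  set δ₂ := eichler f₁ e₃ δ₁
  have h₂ : δ₂ ∈ orbit (ellStab d) δ₁ :=
    eichler_mem_orbit (by simp) (by simp) (by simp) (by simp) δ₁
  have hδ₂e : kb δ₂ e₁ = kb δ e₁ := by simp [δ₂, eichler_apply, hδ₁e, hδ₁e₃]
  have hδ₂f₃ : kb δ₂ f₃ = kb δ f₃ + kb δ₁ f₁ := by simp [δ₂, eichler_apply, δ₁]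
  have key := (h.of_mem_orbit (mem_orbit_trans h₁ h₂) hδ₂e).dvd_kb_f₃
  rw [hδ₂e, hδ₂f₃, hδ₁f₁] at key
  have hf₁ : kb δ f₁ = kb δ f₃ + (kb δ f₁ - k * kb δ f₃) - (1 - k) * kb δ f₃ := by ring
  rw [hf₁]
  exact dvd_sub key (h.dvd_kb_f₃.mul_left _)

lemma dvd_kb (h : HasMinimalE₁Pairing d δ) {y : Λ} (hy : kb (ell d) y = 0) :
    kb δ e₁ ∣ kb δ y := by
  set a := y - kb y f₁ • e₁ - kb y e₁ • f₁
  set δ₁ := eichler e₁ a δ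
  have h₁ : δ₁ ∈ orbit (ellStab d) δ :=
    eichler_mem_orbit (by simp) (by simp [a]) (by simp) (by simp [a, hy]) δ
  have hδ₁e : kb δ₁ e₁ = kb δ e₁ := by simp [δ₁, a, eichler_apply]
  have hδ₁f : kb δ₁ f₁ = kb δ f₁ - kb δ a - kb a a / 2 * kb δ e₁ := by
    simp [δ₁, eichler_apply, a]
    ring
  have hA₁ := (h.of_mem_orbit h₁ hδ₁e).dvd_kb_f₁
  rw [hδ₁e, hδ₁f] at hA₁
  have hδa : kb δ e₁ ∣ kb δ a := by
    have : kb δ a =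
        kb δ f₁ - (kb δ f₁ - kb δ a - kb a a / 2 * kb δ e₁) - kb a a / 2 * kb δ e₁ := by
      ring
    rw [this]
    exact dvd_sub (dvd_sub h.dvd_kb_f₁ hA₁) (dvd_mul_left _ _)
  have hδy : kb δ y = kb δ a + kb y f₁ * kb δ e₁ + kb y e₁ * kb δ f₁ := by
    simp [a]
    ring
  rw [hδy]
  exact dvd_add (dvd_add hδa (dvd_mul_left _ _)) (h.dvd_kb_f₁.mul_left _)

lemma dvd_two (h : HasMinimalE₁Pairing d δ) (hℓ : kb (ell d) δ = 0) (hδ : kb δ δ = -2) :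
    kb δ e₁ ∣ 2 := by
  simpa [hδ] using h.dvd_kb hℓ

end HasMinimalE₁Pairing

def projE₈U₃ (x : Λ) : Λ := fun i => if i.val < 16 ∨ 20 ≤ i.val then x i else 0

def normalForm (d a b t : ℤ) : Λ := a • e₁ + b • f₁ + t • ellPerp d

lemma eq_normalForm_add_projE₈U₃ {δ : Λ} (hℓ : kb (ell d) δ = 0) :
    δ = normalForm d (δ 16) (δ 17) (δ 18) + projE₈U₃ δ := by
  have h19 : δ 19 = -(d / 2) * δ 18 := by rw [kb_ell] at hℓ; linarith
  funext i
  by_cases hi : i.val < 16 ∨ 20 ≤ i.val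
  · obtain ⟨h16, h17, h18, h19⟩ : i ≠ 16 ∧ i ≠ 17 ∧ i ≠ 18 ∧ i ≠ 19 := by
      simp only [ne_eq, Fin.ext_iff]; omega
    simp [normalForm, projE₈U₃, hi, e₁, f₁, ellPerp, h16, h17, h18, h19]
  · obtain rfl | rfl | rfl | rfl : i = 16 ∨ i = 17 ∨ i = 18 ∨ i = 19 := by
      simp only [Fin.ext_iff]; omega
    all_goals simp [normalForm, projE₈U₃, e₁, f₁, ellPerp, h19, mul_comm]

lemma HasMinimalE₁Pairing.exists_normalForm_mem_orbit {δ : Λ} (h : HasMinimalE₁Pairing d δ)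
    (hℓ : kb (ell d) δ = 0) :
    ∃ a, normalForm d a (kb δ e₁) (δ 18 % kb δ e₁) ∈ orbit (ellStab d) δ := by
  have hdvd : ∀ i, kb δ e₁ ∣ projE₈U₃ δ i := by
    intro i
    simp only [projE₈U₃]
    split_ifs with hi
    · rcases hi with hi | hi
      · refine dvd_apply_of_dvd_kb_single (fun j hj => h.dvd_kb ?_) hi
        rw [kb_ell]
        simp [Pi.single_apply, Fin.ext_iff]
        omega
      · obtain rfl | rfl : i = 20 ∨ i = 21 := by omega
        · simpa [kb_f₃] using h.dvd_kb_f₃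
        · simpa [kb_e₃] using h.dvd_kb_e₃
    · exact dvd_zero _
  set w : Λ := fun i => projE₈U₃ δ i / kb δ e₁
  have hw : projE₈U₃ δ = kb δ e₁ • w := funext fun i => (Int.mul_ediv_cancel' (hdvd i)).symm
  have hwe : kb w e₁ = 0 := by simp [w, kb_e₁, projE₈U₃]
  have hℓw : kb (ell d) w = 0 := by simp [w, kb_ell, projE₈U₃]
  -- `E(e₁, a)` kills the `E₈(-1)² ⊕ U₃` part and reduces the `ellPerp d`-coefficient mod `b`.
  set a := -w - (δ 18 / kb δ e₁) • ellPerp d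
  set c := kb δ a + kb a a / 2 * kb δ e₁
  refine ⟨δ 16 - c, ?_⟩
  convert eichler_mem_orbit (d := d) (e := e₁) (a := a) (by simp) (by simp [a, hwe]) (by simp)
    (by simp [a, hℓw]) δ using 1
  calc normalForm d (δ 16 - c) (kb δ e₁) (δ 18 % kb δ e₁)
      = normalForm d (δ 16) (δ 17) (δ 18) + projE₈U₃ δ + kb δ e₁ • a - c • e₁ := by
        rw [hw, normalForm, normalForm, Int.emod_def, ← kb_e₁ δ]
        module
    _ = eichler e₁ a δ := by rw [eichler_apply, ← eq_normalForm_add_projE₈U₃ hℓ]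

lemma kb_normalForm_self (a b t : ℤ) :
    kb (normalForm d a b t) (normalForm d a b t) = 2 * a * b - 2 * (d / 2) * t ^ 2 := by
  simp [normalForm, kb_ellPerp_self, kb_isSymm.eq (ellPerp d)]
  ring

lemma kb_ell_normalForm (a b t : ℤ) : kb (ell d) (normalForm d a b t) = 0 := by
  simp [normalForm]

lemma swapU₁_normalForm (a b t : ℤ) : swapU₁ (normalForm d a b t) = normalForm d b a t :=
  swapU₁_apply a b (by simp) (by simp)

lemma negSwapU₁_normalForm (a b t : ℤ) :
    negSwapU₁ (normalForm d a b t) = normalForm d (-b) (-a) t :=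
  negSwapU₁_apply a b (by simp) (by simp)

lemma del0_eq_normalForm : del0 = normalForm d 1 (-1) 0 := by
  simp [normalForm, del0_eq, sub_eq_add_neg]

lemma del1_eq_normalForm : del1 d = normalForm d 2 ((d / 2 - 1) / 2) 1 := by
  simp [normalForm, del1_eq]

lemma mem_orbit_normalForm (h8 : d % 8 = 2) {a b t : ℤ} (hb : b ∣ 2) (ht : 0 ≤ t) (htb : t < |b|)
    (hv : kb (normalForm d a b t) (normalForm d a b t) = -2) :
    del0 ∈ orbit (ellStab d) (normalForm d a b t) ∨
      del1 d ∈ orbit (ellStab d) (normalForm d a b t) := by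
  rw [kb_normalForm_self] at hv
  have hb' : b = -1 ∨ b = 1 ∨ b = 2 ∨ b = -2 := by
    have := Int.le_of_dvd two_pos hb
    have := Int.le_of_dvd two_pos (neg_dvd.2 hb)
    have : b ≠ 0 := by rintro rfl; simp at hb
    omega
  rcases hb' with rfl | rfl | rfl | rfl
  · obtain rfl : t = 0 := by simp at htb; omega
    obtain rfl : a = 1 := by simp at hv; omega
    exact Or.inl (del0_eq_normalForm ▸ mem_orbit_self _)
  · obtain rfl : t = 0 := by simp at htb; omega
    obtain rfl : a = -1 := by simp at hv; omega
    have := swapU₁_mem_orbit (d := d) (normalForm d (-1) 1 0)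
    rw [swapU₁_normalForm, ← del0_eq_normalForm] at this
    exact Or.inl this
  · obtain rfl : t = 1 := by
      obtain rfl | rfl : t = 0 ∨ t = 1 := by simp at htb; omega
      · simp at hv; omega
      · rfl
    obtain rfl : a = (d / 2 - 1) / 2 := by simp at hv; omega
    have := swapU₁_mem_orbit (d := d) (normalForm d ((d / 2 - 1) / 2) 2 1)
    rw [swapU₁_normalForm, ← del1_eq_normalForm] at this
    exact Or.inr this
  · obtain rfl : t = 1 := by
      obtain rfl | rfl : t = 0 ∨ t = 1 := by simp at htb; omega
      · simp at hv; omega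
      · rfl
    obtain rfl : a = -((d / 2 - 1) / 2) := by simp at hv; omega
    have := negSwapU₁_mem_orbit (d := d) (normalForm d (-((d / 2 - 1) / 2)) (-2) 1)
    rw [negSwapU₁_normalForm, neg_neg, neg_neg, ← del1_eq_normalForm] at this
    exact Or.inr this

lemma exists_mem_orbit_kb_e₁_ne_zero {δ : Λ} (hℓ : kb (ell d) δ = 0) (hδ : kb δ δ = -2) :
    ∃ δ' ∈ orbit (ellStab d) δ, kb δ' e₁ ≠ 0 := by
  by_cases hB : kb δ e₁ = 0
  · by_cases hA : kb δ f₁ = 0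
    · refine ⟨eichler f₁ δ δ, eichler_mem_orbit (by simp) hA (by simp) hℓ δ, ?_⟩
      simp [eichler_apply, hA, hB, hδ]
    · refine ⟨swapU₁ δ, swapU₁_mem_orbit δ, ?_⟩
      simpa [swapU₁, Module.reflection_apply, del0_eq, hB] using hA
  · exact ⟨δ, mem_orbit_self δ, hB⟩

lemma exists_hasMinimalE₁Pairing {δ : Λ} (hℓ : kb (ell d) δ = 0) (hδ : kb δ δ = -2) :
    ∃ δ' ∈ orbit (ellStab d) δ, HasMinimalE₁Pairing d δ' := by
  classical
  have hex : ∃ n, ∃ δ' ∈ orbit (ellStab d) δ, kb δ' e₁ ≠ 0 ∧ (kb δ' e₁).natAbs = n := by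
    obtain ⟨δ', h', hne⟩ := exists_mem_orbit_kb_e₁_ne_zero hℓ hδ
    exact ⟨_, δ', h', hne, rfl⟩
  obtain ⟨δ', hδ', hne, hn⟩ := Nat.find_spec hex
  exact ⟨δ', hδ', hne, fun δ'' h'' hne'' =>
    hn ▸ Nat.find_min' hex ⟨δ'', mem_orbit_trans hδ' h'', hne'', rfl⟩⟩

theorem mem_orbit_del0_or_del1 (h8 : d % 8 = 2) {δ : Λ} (hℓ : kb (ell d) δ = 0)
    (hδ : kb δ δ = -2) : δ ∈ orbit (ellStab d) del0 ∨ δ ∈ orbit (ellStab d) (del1 d) := by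
  obtain ⟨δ', hδ', hmin⟩ := exists_hasMinimalE₁Pairing hℓ hδ
  have hℓ' : kb (ell d) δ' = 0 := (kb_ell_eq_of_mem_orbit hδ').trans hℓ
  have hδ'' : kb δ' δ' = -2 := (kb_self_eq_of_mem_orbit hδ').trans hδ
  obtain ⟨a, hv⟩ := hmin.exists_normalForm_mem_orbit hℓ'
  have hvδ := mem_orbit_trans hδ' hv
  rcases mem_orbit_normalForm h8 (hmin.dvd_two hℓ' hδ'') (Int.emod_nonneg _ hmin.1)
    (Int.emod_lt_abs _ hmin.1) ((kb_self_eq_of_mem_orbit hvδ).trans hδ) with h | h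
  · exact Or.inl (mem_orbit_symm.1 (mem_orbit_trans hvδ h))
  · exact Or.inr (mem_orbit_symm.1 (mem_orbit_trans hvδ h))

lemma del1_add_ell (h8 : d % 8 = 2) :
    del1 d + ell d = (2 : ℤ) • (e₁ + ((d / 2 - 1) / 4) • f₁ + Pi.single 18 1) := by
  have hk : (d / 2 - 1) / 2 = 2 * ((d / 2 - 1) / 4) := by omega
  rw [del1_eq, hk, ellPerp, ell]
  module

lemma del0_add_ell_ne_two_smul (w : Λ) : del0 + ell d ≠ (2 : ℤ) • w := fun h => by
  have h16 := congrFun h 16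
  simp [del0, ell] at h16
  omega

lemma apply_del0_ne_del1 (h8 : d % 8 = 2) (g : Λ ≃ₗ[ℤ] Λ) (hg : g (ell d) = ell d) :
    g del0 ≠ del1 d := fun h =>
  del0_add_ell_ne_two_smul (g.symm (e₁ + ((d / 2 - 1) / 4) • f₁ + Pi.single 18 1)) (by
    rw [← map_smul, ← del1_add_ell h8, ← h, ← hg, ← map_add, g.symm_apply_apply, hg])

end K3

open K3

theorem stmt_12_general (d : ℤ) (h8 : d % 8 = 2) :
    (KB (ell d) del0 = 0 ∧ KB del0 del0 = -2) ∧
    (KB (ell d) (del1 d) = 0 ∧ KB (del1 d) (del1 d) = -2) ∧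
    (∀ δ : Fin 22 → ℤ, KB (ell d) δ = 0 → KB δ δ = -2 →
      (∃ g : (Fin 22 → ℤ) ≃ₗ[ℤ] (Fin 22 → ℤ), IsIsomK g ∧ g (ell d) = ell d ∧ g del0 = δ) ∨
      (∃ g : (Fin 22 → ℤ) ≃ₗ[ℤ] (Fin 22 → ℤ), IsIsomK g ∧ g (ell d) = ell d ∧
        g (del1 d) = δ)) ∧
    ¬ ∃ g : (Fin 22 → ℤ) ≃ₗ[ℤ] (Fin 22 → ℤ), IsIsomK g ∧ g (ell d) = ell d ∧
        g del0 = del1 d := by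
  simp only [← kb_apply]
  refine ⟨?_, ?_, fun δ hℓ hδ => ?_, fun ⟨g, _, hg, h⟩ => apply_del0_ne_del1 h8 g hg h⟩
  · rw [del0_eq_normalForm (d := d), kb_normalForm_self, kb_ell_normalForm]
    norm_num
  · rw [del1_eq_normalForm, kb_normalForm_self, kb_ell_normalForm]
    omega
  · simpa only [mem_orbit_ellStab_iff] using mem_orbit_del0_or_del1 h8 hℓ hδ

/-- For a positive even `d` with `d ≡ 2 (mod 8)`, the set
`Δ_d = {δ ∈ Λ_d : (δ.δ) = -2}` consists of exactly two orbits under the isometries of `Λ`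
fixing `ℓ`, with representatives `δ₀` and `δ₁`. -/
theorem stmt_12 (d : ℤ) (hd : 0 < d) (heven : 2 ∣ d) (h8 : d % 8 = 2) :
    (KB (ell d) del0 = 0 ∧ KB del0 del0 = -2) ∧
    (KB (ell d) (del1 d) = 0 ∧ KB (del1 d) (del1 d) = -2) ∧
    (∀ δ : Fin 22 → ℤ, KB (ell d) δ = 0 → KB δ δ = -2 →
      (∃ g : (Fin 22 → ℤ) ≃ₗ[ℤ] (Fin 22 → ℤ), IsIsomK g ∧ g (ell d) = ell d ∧ g del0 = δ) ∨
      (∃ g : (Fin 22 → ℤ) ≃ₗ[ℤ] (Fin 22 → ℤ), IsIsomK g ∧ g (ell d) = ell d ∧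
        g (del1 d) = δ)) ∧
    ¬ ∃ g : (Fin 22 → ℤ) ≃ₗ[ℤ] (Fin 22 → ℤ), IsIsomK g ∧ g (ell d) = ell d ∧
        g del0 = del1 d :=
  stmt_12_general d h8
end
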